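/- arXiv:2508.19435 — 6 statements merged into one kernel-verified Lean document; each statement's English description precedes it below -/
import Mathlib

section
/- For every s ≥ 2 and n ≥ s, the weak saturation number of K_s satisfies wsat(n, K_s) = C(n,2) − C(n−s+2, 2). -/
open SimpleGraph

/-- `G` contains a copy of `F`. -/
def ContainsCopy {W V : Type*} (F : SimpleGraph W) (G : SimpleGraph V) : Prop :=
  ∃ f : W ↪ V, ∀ a b, F.Adj a b → G.Adj (f a) (f b)

/-- One step of the weak saturation process: add one missing edge `e` so that the new
graph contains a copy of `F` through `e`. -/
def AddStep {W V : Type*} (F : SimpleGraph W) (G G' : SimpleGraph V) : Prop :=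
  ∃ e, e ∉ G.edgeSet ∧ G'.edgeSet = insert e G.edgeSet ∧
    ∃ f : W ↪ V, (∀ a b, F.Adj a b → G'.Adj (f a) (f b)) ∧
      ∃ a b, F.Adj a b ∧ s(f a, f b) = e

/-- `G` is weakly `F`-saturated. -/
def IsWeaklySaturated {W V : Type*} (F : SimpleGraph W) (G : SimpleGraph V) : Prop :=
  ¬ ContainsCopy F G ∧
  ∃ (m : ℕ) (c : ℕ → SimpleGraph V), c 0 = G ∧ c m = ⊤ ∧
    ∀ i < m, AddStep F (c i) (c (i + 1))

/-- The weak saturation number `wsat(n, F)`. -/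
noncomputable def wsat {W : Type*} (n : ℕ) (F : SimpleGraph W) : ℕ :=
  sInf {m | ∃ G : SimpleGraph (Fin n), IsWeaklySaturated F G ∧ G.edgeSet.ncard = m}

/-!
Upper bound: let `T` be a set of `n - s + 2` vertices and `G` the graph of all edges meeting the
remaining `s - 2` vertices. An `s`-clique of `G` has at most one vertex in `T`, so `G` is
`K_s`-free, while every edge `xy` inside `T` spans a `K_s` together with the `s - 2` outside
vertices; adding the edges inside `T` one by one therefore saturates `G`.

Lower bound (Lovász's skew Bollobás theorem): if the `i`-th added edge `x_i y_i` completes the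
clique `S_i`, then `A_i = {x_i, y_i}` and `B_i = S_iᶜ` satisfy `A_i ∩ B_i = ∅` and
`A_j ∩ B_i ≠ ∅` for `i < j`, since `x_j y_j` was not yet present after step `i`. Placing the
vertices on the moment curve in `ℚ^(n-s+2)`, the bivectors `x_i ∧ y_i` become linearly independent
in `⋀² ℚ^(n-s+2)`: pairing with the wedge of the Lagrange polynomials of `x_i, y_i` at the nodes
`A_i ∪ B_i` gives a triangular matrix with unit diagonal. So at most `C(n-s+2, 2)` edges are added.
-/

open Finset Polynomial

theorem linearIndependent_of_triangular {K V ι : Type*} [Field K] [AddCommGroup V] [Module K V]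
    [Fintype ι] [LinearOrder ι] {v : ι → V} (φ : ι → Module.Dual K V)
    (hdiag : ∀ i, φ i (v i) ≠ 0) (htri : ∀ i j, i < j → φ i (v j) = 0) :
    LinearIndependent K v := by
  classical
  let M : Matrix ι ι K := .of fun i j => φ i (v j)
  have hM : IsUnit M := by
    rw [Matrix.isUnit_iff_isUnit_det, Matrix.det_of_isLowerTriangular M fun i j hij => htri i j hij]
    exact isUnit_iff_ne_zero.2 (prod_ne_zero_iff.2 fun i _ => hdiag i)
  exact LinearIndependent.of_comp (LinearMap.pi φ) (Matrix.linearIndependent_cols_iff_isUnit.2 hM)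

theorem Lagrange.natDegree_basis_lt {F ι : Type*} [Field F] [DecidableEq ι] {s : Finset ι}
    {v : ι → F} {i : ι} {k : ℕ} (hvs : Set.InjOn v s) (hi : i ∈ s) (hk : #s ≤ k) :
    (Lagrange.basis s v i).natDegree < k := by
  rw [Lagrange.natDegree_basis hvs hi]
  have := card_pos.2 ⟨i, hi⟩
  omega

section MomentCurve

variable {K : Type*} [Field K]

def powerVec (k : ℕ) (t : K) : Fin k → K := fun j => t ^ (j : ℕ)

noncomputable def coeffDual (k : ℕ) (P : K[X]) : Module.Dual K (Fin k → K) :=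
  ∑ j : Fin k, P.coeff j • LinearMap.proj j

theorem coeffDual_powerVec {k : ℕ} {P : K[X]} (hP : P.natDegree < k) (t : K) :
    coeffDual k P (powerVec k t) = P.eval t := by
  simp [coeffDual, powerVec, eval_eq_sum_range' hP,
    Fin.sum_univ_eq_sum_range (fun j => P.coeff j * t ^ j)]

theorem pairingDual_coeffDual_powerVec {k a : ℕ} {P : Fin a → K[X]}
    (hP : ∀ l, (P l).natDegree < k) (t : Fin a → K) :
    exteriorPower.pairingDual K (Fin k → K) a (exteriorPower.ιMulti K a fun l => coeffDual k (P l))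
      (exteriorPower.ιMulti K a fun r => powerVec k (t r)) =
      (Matrix.of fun r l => (P l).eval (t r)).det := by
  simp [coeffDual_powerVec (hP _)]

end MomentCurve

theorem skew_bollobas {α ι : Type*} [Countable α] [Fintype ι] [LinearOrder ι] {a b : ℕ}
    (A B : ι → Finset α) (hA : ∀ i, #(A i) = a) (hB : ∀ i, #(B i) ≤ b)
    (hdisj : ∀ i, Disjoint (A i) (B i)) (hcross : ∀ i j, i < j → ¬ Disjoint (A j) (B i)) :
    Fintype.card ι ≤ (a + b).choose a := by
  classical
  obtain ⟨ν, hν⟩ : ∃ ν : α → ℚ, ν.Injective :=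
    let ⟨f, hf⟩ := Countable.exists_injective_nat α
    ⟨_, Nat.cast_injective.comp hf⟩
  let e i : Fin a ≃ A i := ((A i).equivFinOfCardEq (hA i)).symm
  let ℓ i l : ℚ[X] := Lagrange.basis (A i ∪ B i) ν (e i l)
  have hℓ_deg i l : (ℓ i l).natDegree < a + b :=
    Lagrange.natDegree_basis_lt hν.injOn (mem_union_left _ (e i l).2)
      ((card_union_le _ _).trans (hA i ▸ Nat.add_le_add_left (hB i) _))
  have hℓ_eval i l {t} (ht : t ∈ A i ∪ B i) :
      (ℓ i l).eval (ν t) = if t = e i l then 1 else 0 := by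
    split_ifs with h
    · subst h
      exact Lagrange.eval_basis_self hν.injOn ht
    · exact Lagrange.eval_basis_of_ne (Ne.symm h) ht
  let F j : ⋀[ℚ]^a (Fin (a + b) → ℚ) :=
    exteriorPower.ιMulti ℚ a fun r => powerVec (a + b) (ν (e j r))
  let Φ i := exteriorPower.pairingDual ℚ (Fin (a + b) → ℚ) a
    (exteriorPower.ιMulti ℚ a fun l => coeffDual (a + b) (ℓ i l))
  have hΦ i j : Φ i (F j) = (Matrix.of fun r l => (ℓ i l).eval (ν (e j r))).det :=
    pairingDual_coeffDual_powerVec (hℓ_deg i) _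
  have hli : LinearIndependent ℚ F := by
    refine linearIndependent_of_triangular Φ (fun i => ?_) (fun i j hij => ?_)
    · have hid : (Matrix.of fun r l => (ℓ i l).eval (ν (e i r))) = 1 := by
        ext r l
        simp [hℓ_eval i l (mem_union_left _ (e i r).2), Matrix.one_apply]
      rw [hΦ, hid, Matrix.det_one]
      exact one_ne_zero
    · obtain ⟨t, htA, htB⟩ := not_disjoint_iff.1 (hcross i j hij)
      rw [hΦ]
      refine Matrix.det_eq_zero_of_row_eq_zero ((e j).symm ⟨t, htA⟩) fun l => ?_
      simp only [Matrix.of_apply, Equiv.apply_symm_apply]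
      rw [hℓ_eval i l (mem_union_right _ htB), if_neg]
      exact fun h => disjoint_left.1 (hdisj i) (h ▸ (e i l).2) htB
  simpa [exteriorPower.finrank_eq] using hli.fintype_card_le_finrank

theorem exists_chain_of_reflTransGen {α : Type*} {r : α → α → Prop} {a b : α}
    (h : Relation.ReflTransGen r a b) :
    ∃ (m : ℕ) (c : ℕ → α), c 0 = a ∧ c m = b ∧ ∀ i < m, r (c i) (c (i + 1)) := by
  induction h with
  | refl => exact ⟨0, fun _ => a, rfl, rfl, by simp⟩
  | @tail b d _ hbd ih =>
    obtain ⟨m, c, h0, hm, hc⟩ := ih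
    refine ⟨m + 1, Function.update c (m + 1) d, by simp [h0], by simp, fun i hi => ?_⟩
    obtain hi | rfl := Nat.lt_succ_iff_lt_or_eq.1 hi
    · simpa [Function.update_of_ne (by omega : i ≠ m + 1),
        Function.update_of_ne (by omega : i + 1 ≠ m + 1)] using hc i hi
    · simpa [hm] using hbd

theorem ncard_edgeSet_top (V : Type*) [Fintype V] :
    (⊤ : SimpleGraph V).edgeSet.ncard = (Fintype.card V).choose 2 := by
  classical
  rw [← coe_edgeFinset, Set.ncard_coe_finset, card_edgeFinset_top_eq_card_choose_two]

theorem ncard_edgeSet_add_ncard_edgeSet_compl {V : Type*} [Fintype V] (G : SimpleGraph V) :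
    G.edgeSet.ncard + Gᶜ.edgeSet.ncard = (Fintype.card V).choose 2 := by
  rw [← Set.ncard_union_eq (disjoint_edgeSet.2 disjoint_compl_right), ← edgeSet_sup,
    sup_compl_eq_top, ncard_edgeSet_top]

section AddStepChain

variable {W V : Type*} {F : SimpleGraph W}

theorem AddStep.le {G G' : SimpleGraph V} (h : AddStep F G G') : G ≤ G' := by
  obtain ⟨e, -, hG', -⟩ := h
  exact edgeSet_subset_edgeSet.1 (hG' ▸ Set.subset_insert e G.edgeSet)

theorem AddStep.ncard_edgeSet [Finite V] {G G' : SimpleGraph V} (h : AddStep F G G') :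
    G'.edgeSet.ncard = G.edgeSet.ncard + 1 := by
  obtain ⟨e, he, hG', -⟩ := h
  rw [hG', Set.ncard_insert_of_notMem he]

variable {c : ℕ → SimpleGraph V} {m : ℕ}

theorem addStep_chain_mono (hc : ∀ i < m, AddStep F (c i) (c (i + 1))) {i j : ℕ} (hij : i ≤ j)
    (hjm : j ≤ m) : c i ≤ c j := by
  induction j, hij using Nat.le_induction with
  | base => exact le_rfl
  | succ j hij ih => exact (ih (by omega)).trans (hc j (by omega)).le

theorem ncard_edgeSet_addStep_chain [Finite V] (hc : ∀ i < m, AddStep F (c i) (c (i + 1)))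
    {i : ℕ} (him : i ≤ m) : (c i).edgeSet.ncard = (c 0).edgeSet.ncard + i := by
  induction i with
  | zero => rfl
  | succ i ih => rw [(hc i (by omega)).ncard_edgeSet, ih (by omega), add_assoc]

end AddStepChain

section Cliques

variable {V : Type*} {s : ℕ}

theorem isNClique_map_of_forall_adj {G : SimpleGraph V} {f : Fin s ↪ V}
    (hf : ∀ a b, (⊤ : SimpleGraph (Fin s)).Adj a b → G.Adj (f a) (f b)) :
    G.IsNClique s (univ.map f) := by
  refine ⟨?_, by simp⟩
  rw [coe_map, coe_univ, Set.image_univ]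
  rintro _ ⟨a, rfl⟩ _ ⟨b, rfl⟩ hab
  exact hf a b ((top_adj a b).2 (ne_of_apply_ne f hab))

theorem AddStep.exists_isNClique {G G' : SimpleGraph V}
    (h : AddStep (⊤ : SimpleGraph (Fin s)) G G') :
    ∃ x y U, x ≠ y ∧ s(x, y) ∉ G.edgeSet ∧ G'.IsNClique s U ∧ x ∈ U ∧ y ∈ U := by
  obtain ⟨_, he, -, f, hf, a, b, hab, rfl⟩ := h
  exact ⟨f a, f b, univ.map f, f.injective.ne hab, he, isNClique_map_of_forall_adj hf,
    mem_map_of_mem f (mem_univ a), mem_map_of_mem f (mem_univ b)⟩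

theorem addStep_sup_edge {G : SimpleGraph V} {x y : V} (hxy : x ≠ y) (hnadj : ¬G.Adj x y)
    {U : Finset V} (hU : (G ⊔ edge x y).IsNClique s U) (hx : x ∈ U) (hy : y ∈ U) :
    AddStep (⊤ : SimpleGraph (Fin s)) G (G ⊔ edge x y) := by
  let e : Fin s ≃ U := (U.equivFinOfCardEq hU.card_eq).symm
  let f : Fin s ↪ V := e.toEmbedding.trans (Function.Embedding.subtype _)
  refine ⟨s(x, y), hnadj, by rw [edgeSet_sup, edgeSet_edge_of_ne hxy, Set.union_singleton], f,
    fun a b hab => hU.isClique (e a).2 (e b).2 ?_, e.symm ⟨x, hx⟩, e.symm ⟨y, hy⟩, ?_, by simp [f]⟩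
  · simpa [f, Subtype.val_inj] using hab
  · simpa using hxy

end Cliques

theorem addStep_chain_length_le_choose {V : Type*} [Fintype V] {s m : ℕ}
    {c : ℕ → SimpleGraph V} (hc : ∀ i < m, AddStep (⊤ : SimpleGraph (Fin s)) (c i) (c (i + 1))) :
    m ≤ (Fintype.card V - s + 2).choose 2 := by
  classical
  choose x y U hxy hnot hU hx hy using fun i : Fin m => (hc i i.2).exists_isNClique
  have hcross : ∀ i j : Fin m, i < j → ¬ Disjoint ({x j, y j} : Finset V) (U i)ᶜ := by
    intro i j hij hsub
    rw [disjoint_compl_right_iff, insert_subset_iff, singleton_subset_iff] at hsub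
    exact hnot j (addStep_chain_mono hc (Nat.succ_le_of_lt hij) j.2.le
      ((hU i).isClique hsub.1 hsub.2 (hxy j)))
  have := skew_bollobas (fun i => {x i, y i}) (fun i => (U i)ᶜ) (fun i => card_pair (hxy i))
    (fun i => by rw [card_compl, (hU i).card_eq])
    (fun i => by simp [disjoint_compl_right_iff, insert_subset_iff, hx i, hy i]) hcross
  simpa [add_comm] using this

theorem IsWeaklySaturated.choose_sub_le_ncard {V : Type*} [Fintype V] {s : ℕ}
    {G : SimpleGraph V} (hG : IsWeaklySaturated (⊤ : SimpleGraph (Fin s)) G) :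
    (Fintype.card V).choose 2 - (Fintype.card V - s + 2).choose 2 ≤ G.edgeSet.ncard := by
  obtain ⟨-, m, c, rfl, hcm, hc⟩ := hG
  have hsteps := ncard_edgeSet_addStep_chain hc le_rfl
  rw [hcm, ncard_edgeSet_top] at hsteps
  have := addStep_chain_length_le_choose hc
  omega

section CliqueOn

variable {V : Type*} (T : Finset V)

def cliqueOn : SimpleGraph V := (⊤ : SimpleGraph T).map (Function.Embedding.subtype _)

variable {T} in
@[simp]
theorem cliqueOn_adj {u v : V} : (cliqueOn T).Adj u v ↔ u ≠ v ∧ u ∈ T ∧ v ∈ T := by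
  rw [cliqueOn, map_adj']
  constructor
  · rintro ⟨huv, u, v, -, rfl, rfl⟩
    exact ⟨huv, u.2, v.2⟩
  · rintro ⟨huv, hu, hv⟩
    exact ⟨huv, ⟨u, hu⟩, ⟨v, hv⟩, by simpa using huv, rfl, rfl⟩

theorem ncard_edgeSet_cliqueOn : (cliqueOn T).edgeSet.ncard = (#T).choose 2 := by
  rw [cliqueOn, edgeSet_map,
    Set.ncard_image_of_injective _ (Function.Embedding.subtype _).sym2Map.injective,
    ncard_edgeSet_top, Fintype.card_coe]

variable [Fintype V] [DecidableEq V]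

theorem cliqueFree_compl_cliqueOn : (cliqueOn T)ᶜ.CliqueFree (#Tᶜ + 2) := by
  intro U hU
  have hin : #(U.filter (· ∈ T)) ≤ 1 := by
    refine card_le_one.2 fun u hu v hv => by_contra fun huv => ?_
    rw [mem_filter] at hu hv
    exact ((compl_adj _ _ _).1 (hU.isClique hu.1 hv.1 huv)).2 (cliqueOn_adj.2 ⟨huv, hu.2, hv.2⟩)
  have hout : #(U.filter (· ∉ T)) ≤ #Tᶜ :=
    card_le_card fun u hu => mem_compl.2 (mem_filter.1 hu).2
  have := card_filter_add_card_filter_not (s := U) (· ∈ T)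
  have := hU.card_eq
  omega

theorem reflTransGen_addStep_top_of_compl_cliqueOn_le {s : ℕ} (hT : #Tᶜ + 2 = s)
    (G : SimpleGraph V) (hG : (cliqueOn T)ᶜ ≤ G) :
    Relation.ReflTransGen (AddStep (⊤ : SimpleGraph (Fin s))) G ⊤ := by
  induction G using WellFoundedGT.induction with
  | _ G ih =>
  by_cases htop : G = ⊤
  · rw [htop]
  obtain ⟨x, y, hxy, hnadj⟩ : ∃ x y, x ≠ y ∧ ¬ G.Adj x y := by
    by_contra! h
    exact htop (eq_top_iff.2 fun x y hxy => h x y hxy)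
  have hxyT : x ∈ T ∧ y ∈ T := by
    by_contra hxyT
    exact hnadj (hG ((compl_adj _ _ _).2 ⟨hxy, fun h => hxyT (cliqueOn_adj.1 h).2⟩))
  have hU : (G ⊔ edge x y).IsNClique s (insert x (insert y Tᶜ)) := by
    refine ⟨fun u hu v hv huv => ?_, ?_⟩
    · by_cases huvT : u ∈ T ∧ v ∈ T
      · refine Or.inr ((edge_adj ..).2 ⟨?_, huv⟩)
        simp only [coe_insert, Set.mem_insert_iff, mem_coe, mem_compl, huvT.1, huvT.2,
          not_true_eq_false, or_false] at hu hv
        grind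
      · exact Or.inl (hG ((compl_adj _ _ _).2 ⟨huv, fun h => huvT (cliqueOn_adj.1 h).2⟩))
    · rw [card_insert_of_notMem, card_insert_of_notMem] <;> simp [hxy, hxyT, hT]
  exact .head (addStep_sup_edge hxy hnadj hU (mem_insert_self _ _)
    (mem_insert_of_mem (mem_insert_self _ _)))
    (ih _ (lt_sup_edge G x y hxy hnadj) (hG.trans le_sup_left))

theorem isWeaklySaturated_compl_cliqueOn {s : ℕ} (hT : #Tᶜ + 2 = s) :
    IsWeaklySaturated (⊤ : SimpleGraph (Fin s)) (cliqueOn T)ᶜ := by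
  refine ⟨fun ⟨_, hf⟩ => ?_, exists_chain_of_reflTransGen
    (reflTransGen_addStep_top_of_compl_cliqueOn_le T hT _ le_rfl)⟩
  subst hT
  exact cliqueFree_compl_cliqueOn T _ (isNClique_map_of_forall_adj hf)

end CliqueOn

/-- For every `s ≥ 2` and `n ≥ s`, `wsat(n, K_s) = C(n,2) − C(n−s+2, 2)`. -/
theorem wsat_complete (s n : ℕ) (hs : 2 ≤ s) (hn : s ≤ n) :
    wsat n (⊤ : SimpleGraph (Fin s)) = n.choose 2 - (n - s + 2).choose 2 := by
  obtain ⟨T, -, hT⟩ := exists_subset_card_eq (show n - s + 2 ≤ #(univ : Finset (Fin n)) by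
    rw [card_univ, Fintype.card_fin]; omega)
  have hTc : #Tᶜ + 2 = s := by rw [card_compl, Fintype.card_fin, hT]; omega
  have hsat := isWeaklySaturated_compl_cliqueOn T hTc
  have hcard : (cliqueOn T)ᶜ.edgeSet.ncard = n.choose 2 - (n - s + 2).choose 2 := by
    have := ncard_edgeSet_add_ncard_edgeSet_compl (cliqueOn T)
    rw [ncard_edgeSet_cliqueOn, hT, Fintype.card_fin] at this
    omega
  refine le_antisymm (Nat.sInf_le ⟨_, hsat, hcard⟩) (le_csInf ⟨_, _, hsat, hcard⟩ ?_)
  rintro _ ⟨G, hG, rfl⟩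
  simpa using hG.choose_sub_le_ncard
end

section
/- Let s > 2. The graph on 2s+1 vertices formed by a path P_1 on s−1 vertices, a disjoint path P_2 on s−2 vertices, and a 4-cycle (a,b,c,d) disjoint from both paths, together with all edges from a to the vertices of P_1 and all edges from b to the vertices of P_2, is erasable and has exactly 4s−4 edges. -/
/-!
Erase the edges one at a time, each time splitting the vertices into two sides of `s` and one
vertex set aside. The 4-cycle goes first, in the order `cd, ad, bc, ab`: each of these edges
is the only edge between `P₁` plus one of its endpoints and the other side, once a suitable
cycle vertex is set aside. Then the fans `a + P₁` and `b + P₂` are dismantled from the far end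
of their paths: with the hub set aside, the last path vertex `p` is cut off from its path
neighbour; `p` is then a leaf on the hub, and its spoke goes next. Every step deletes one edge
and the process ends at the empty graph, so the number of steps, `4 + (2s - 3) + (2s - 5)`,
is also the number of edges.
-/

open SimpleGraph
/-- One step of the erase process with parameters `s`, `t`: delete an edge `e` that is
the unique edge between a set `V₁` of size `s` and a set `V₂` of size `t`, where
`V₁`, `V₂` and one extra vertex `v` partition the vertex set. -/
def EraseStep (s t : ℕ) {V : Type*} (G G' : SimpleGraph V) : Prop :=
  ∃ e ∈ G.edgeSet, G'.edgeSet = G.edgeSet \ {e} ∧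
    ∃ (V1 V2 : Set V) (v : V),
      Disjoint V1 V2 ∧ v ∉ V1 ∧ v ∉ V2 ∧ V1 ∪ V2 ∪ {v} = Set.univ ∧
      V1.ncard = s ∧ V2.ncard = t ∧
      (∃ x ∈ V1, ∃ y ∈ V2, e = s(x, y)) ∧
      ∀ x ∈ V1, ∀ y ∈ V2, G.Adj x y → s(x, y) = e

/-- `G` is erasable (with parameters `s`, `t`): its edges can be deleted one at a time
by erase steps until no edge remains. -/
def Erasable (s t : ℕ) {V : Type*} (G : SimpleGraph V) : Prop :=
  ∃ (m : ℕ) (c : ℕ → SimpleGraph V), c 0 = G ∧ c m = ⊥ ∧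
    ∀ i < m, EraseStep s t (c i) (c (i + 1))

/-- The graph on `2s+1` vertices made of a path on `s−1` vertices, a disjoint path on
`s−2` vertices, and a `4`-cycle `(a,b,c,d)` (the vertices `0,1,2,3` of `Fin 4`,
with `a = 0`, `b = 1`, `c = 2`, `d = 3`), where `a` is joined to all vertices of the
first path and `b` to all vertices of the second path. -/
def ConstrGraph (s : ℕ) : SimpleGraph (Fin (s - 1) ⊕ Fin (s - 2) ⊕ Fin 4) :=
  SimpleGraph.fromRel fun x y =>
    match x, y with
    | Sum.inl i, Sum.inl j => (i : ℕ) + 1 = j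
    | Sum.inr (Sum.inl i), Sum.inr (Sum.inl j) => (i : ℕ) + 1 = j
    | Sum.inr (Sum.inr k), Sum.inr (Sum.inr l) =>
        ((k : ℕ), (l : ℕ)) ∈ [(0, 1), (1, 2), (2, 3), (3, 0)]
    | Sum.inr (Sum.inr k), Sum.inl _ => (k : ℕ) = 0
    | Sum.inr (Sum.inr k), Sum.inr (Sum.inl _) => (k : ℕ) = 1
    | _, _ => False

open Finset

section Erasure

variable {V : Type*} {s t : ℕ}

inductive ErasableIn (s t : ℕ) : ℕ → SimpleGraph V → Prop
  | bot : ErasableIn s t 0 ⊥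
  | step {n : ℕ} {G G' : SimpleGraph V} :
      EraseStep s t G G' → ErasableIn s t n G' → ErasableIn s t (n + 1) G

theorem ErasableIn.erasable {n : ℕ} {G : SimpleGraph V} (h : ErasableIn s t n G) :
    Erasable s t G := by
  induction h with
  | bot => exact ⟨0, fun _ => ⊥, rfl, rfl, by simp⟩
  | @step n G G' hstep _ ih =>
    obtain ⟨m, c, hc0, hcm, hc⟩ := ih
    refine ⟨m + 1, fun | 0 => G | i + 1 => c i, rfl, hcm, ?_⟩
    rintro (_ | i) hi
    · simpa [hc0] using hstep
    · exact hc i (by omega)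

theorem EraseStep.ncard_edgeSet_add_one [Finite V] {G G' : SimpleGraph V}
    (h : EraseStep s t G G') : G'.edgeSet.ncard + 1 = G.edgeSet.ncard := by
  obtain ⟨e, he, hG', -⟩ := h
  rw [hG', Set.ncard_sdiff_singleton_add_one he]

theorem ErasableIn.ncard_edgeSet [Finite V] {n : ℕ} {G : SimpleGraph V}
    (h : ErasableIn s t n G) : G.edgeSet.ncard = n := by
  induction h with
  | bot => simp
  | step hstep _ ih => rw [← hstep.ncard_edgeSet_add_one, ih]

theorem ErasableIn.of_steps {f : ℕ → SimpleGraph V} {n : ℕ} (h₀ : ErasableIn s t n (f 0)) :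
    ∀ {m : ℕ}, (∀ i < m, EraseStep s t (f (i + 1)) (f i)) → ErasableIn s t (n + m) (f m)
  | 0, _ => h₀
  | m + 1, hstep => .step (hstep m m.lt_succ_self) (of_steps h₀ fun i hi => hstep i (by omega))

theorem eraseStep_of_cut [Fintype V] [DecidableEq V] (hV : Fintype.card V = s + t + 1)
    {G G' : SimpleGraph V} (x y v : V) (A : Finset V) (hG' : G.deleteEdges {s(x, y)} = G')
    (hxy : G.Adj x y) (hx : x ∈ A) (hy : y ∉ A) (hyv : y ≠ v) (hv : v ∉ A) (hA : #A = s)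
    (hcut : ∀ p ∈ A, ∀ q ∉ A, q ≠ v → G.Adj p q → s(p, q) = s(x, y)) :
    EraseStep s t G G' := by
  subst hG'
  refine ⟨s(x, y), hxy, edgeSet_deleteEdges _, A, (↑A ∪ {v})ᶜ, v, ?_, hv, by simp, ?_,
    by simpa using hA, ?_, ⟨x, hx, y, by simp [hy, hyv], rfl⟩, ?_⟩
  · exact disjoint_compl_right.mono_left Set.subset_union_left
  · rw [Set.union_right_comm, Set.union_compl_self]
  · have := Set.ncard_add_ncard_compl (↑A ∪ {v} : Set V)
    rw [Set.ncard_union_eq (by simpa using hv), Set.ncard_coe_finset, hA, Set.ncard_singleton,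
      Nat.card_eq_fintype_card, hV] at this
    omega
  · intro p hp q hq hpq
    simp only [Set.compl_union, Set.mem_inter_iff, Set.mem_compl_iff, Finset.mem_coe,
      Set.mem_singleton_iff] at hq
    exact hcut p hp q hq.1 hq.2 hpq

end Erasure

/-- The subgraph of `ConstrGraph (k + 3)` made of the first `n` cycle edges in the order
`ab, bc, ad, cd`, the first `m₁` edges of the fan at `a` and the first `m₂` edges of the fan
at `b`, the edges of a fan with hub `h` and path `p₀ p₁ …` being ordered
`h p₀, h p₁, p₀ p₁, h p₂, p₁ p₂, …`: the spoke `h pᵢ` has number `2i - 1` (number `0` if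
`i = 0`) and the path edge `pᵢ pᵢ₊₁` has number `2i + 2`. -/
def constrStage (k n m₁ m₂ : ℕ) : SimpleGraph (Fin (k + 2) ⊕ Fin (k + 1) ⊕ Fin 4) :=
  fromRel fun x y =>
    match x, y with
    | .inl i, .inl j => (i : ℕ) + 1 = j ∧ 2 * (i : ℕ) + 2 < m₁
    | .inr (.inl i), .inr (.inl j) => (i : ℕ) + 1 = j ∧ 2 * (i : ℕ) + 2 < m₂
    | .inr (.inr c), .inr (.inr d) => (c, d) ∈ [(0, 1), (1, 2), (0, 3), (2, 3)].take n
    | .inr (.inr c), .inl i => c = 0 ∧ 0 < m₁ ∧ 2 * (i : ℕ) ≤ m₁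
    | .inr (.inr c), .inr (.inl j) => c = 1 ∧ 0 < m₂ ∧ 2 * (j : ℕ) ≤ m₂
    | _, _ => False

section ConstrStage

variable {k n m₁ m₂ : ℕ}

@[simp] theorem constrStage_adj_inl_inl {i j : Fin (k + 2)} :
    (constrStage k n m₁ m₂).Adj (.inl i) (.inl j) ↔
      (i : ℕ) + 1 = j ∧ 2 * (i : ℕ) + 2 < m₁ ∨ (j : ℕ) + 1 = i ∧ 2 * (j : ℕ) + 2 < m₁ := by
  simp [constrStage]; omega

@[simp] theorem constrStage_adj_inr_inl_inr_inl {i j : Fin (k + 1)} :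
    (constrStage k n m₁ m₂).Adj (.inr (.inl i)) (.inr (.inl j)) ↔
      (i : ℕ) + 1 = j ∧ 2 * (i : ℕ) + 2 < m₂ ∨ (j : ℕ) + 1 = i ∧ 2 * (j : ℕ) + 2 < m₂ := by
  simp [constrStage]; omega

@[simp] theorem constrStage_adj_inr_inr_inr_inr {c d : Fin 4} :
    (constrStage k n m₁ m₂).Adj (.inr (.inr c)) (.inr (.inr d)) ↔
      (c, d) ∈ [(0, 1), (1, 2), (0, 3), (2, 3)].take n ∨
        (d, c) ∈ [(0, 1), (1, 2), (0, 3), (2, 3)].take n := by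
  simp only [constrStage, fromRel_adj, ne_eq, Sum.inr.injEq, and_iff_right_iff_imp]
  rintro (h | h) rfl <;> fin_cases c <;> simpa using List.mem_of_mem_take h

@[simp] theorem constrStage_adj_inr_inr_inl {c : Fin 4} {i : Fin (k + 2)} :
    (constrStage k n m₁ m₂).Adj (.inr (.inr c)) (.inl i) ↔ c = 0 ∧ 0 < m₁ ∧ 2 * (i : ℕ) ≤ m₁ := by
  simp [constrStage]

@[simp] theorem constrStage_adj_inl_inr_inr {c : Fin 4} {i : Fin (k + 2)} :
    (constrStage k n m₁ m₂).Adj (.inl i) (.inr (.inr c)) ↔ c = 0 ∧ 0 < m₁ ∧ 2 * (i : ℕ) ≤ m₁ := by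
  simp [constrStage]

@[simp] theorem constrStage_adj_inr_inr_inr_inl {c : Fin 4} {j : Fin (k + 1)} :
    (constrStage k n m₁ m₂).Adj (.inr (.inr c)) (.inr (.inl j)) ↔
      c = 1 ∧ 0 < m₂ ∧ 2 * (j : ℕ) ≤ m₂ := by
  simp [constrStage]

@[simp] theorem constrStage_adj_inr_inl_inr_inr {c : Fin 4} {j : Fin (k + 1)} :
    (constrStage k n m₁ m₂).Adj (.inr (.inl j)) (.inr (.inr c)) ↔
      c = 1 ∧ 0 < m₂ ∧ 2 * (j : ℕ) ≤ m₂ := by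
  simp [constrStage]

@[simp] theorem constrStage_not_adj_inl_inr_inl {i : Fin (k + 2)} {j : Fin (k + 1)} :
    ¬ (constrStage k n m₁ m₂).Adj (.inl i) (.inr (.inl j)) := by
  simp [constrStage]

@[simp] theorem constrStage_not_adj_inr_inl_inl {i : Fin (k + 2)} {j : Fin (k + 1)} :
    ¬ (constrStage k n m₁ m₂).Adj (.inr (.inl j)) (.inl i) := by
  simp [constrStage]

theorem card_constrStage_vertices :
    Fintype.card (Fin (k + 2) ⊕ Fin (k + 1) ⊕ Fin 4) = (k + 3) + (k + 3) + 1 := by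
  simp; omega

theorem eraseStep_constrStage_cycle (hn : n < 4) :
    EraseStep (k + 3) (k + 3) (constrStage k (n + 1) m₁ m₂) (constrStage k n m₁ m₂) := by
  interval_cases n
  · apply eraseStep_of_cut card_constrStage_vertices (.inr (.inr 0)) (.inr (.inr 1)) (.inr (.inr 2))
      (univ.disjSum (disjSum ∅ {0}))
    · ext (i | j | c) (i' | j' | c') <;> simp
      all_goals omega
    all_goals simp +contextual
  · apply eraseStep_of_cut card_constrStage_vertices (.inr (.inr 2)) (.inr (.inr 1)) (.inr (.inr 0))
      (univ.disjSum (disjSum ∅ {2}))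
    · ext (i | j | c) (i' | j' | c') <;> simp
      all_goals omega
    all_goals simp +contextual
  · apply eraseStep_of_cut card_constrStage_vertices (.inr (.inr 0)) (.inr (.inr 3)) (.inr (.inr 1))
      (univ.disjSum (disjSum ∅ {0}))
    · ext (i | j | c) (i' | j' | c') <;> simp
      all_goals omega
    all_goals simp +contextual
  · apply eraseStep_of_cut card_constrStage_vertices (.inr (.inr 3)) (.inr (.inr 2)) (.inr (.inr 0))
      (univ.disjSum (disjSum ∅ {3}))
    · ext (i | j | c) (i' | j' | c') <;> simp
      all_goals omega
    all_goals simp +contextual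

theorem eraseStep_constrStage_fan₁ {m : ℕ} (hm : m < 2 * k + 3) :
    EraseStep (k + 3) (k + 3) (constrStage k 0 (m + 1) m₂) (constrStage k 0 m m₂) := by
  obtain ⟨j, rfl | rfl⟩ := Nat.even_or_odd' m
  · rcases j with _ | j
    · apply eraseStep_of_cut card_constrStage_vertices (.inr (.inr 0)) (.inl ⟨0, by omega⟩)
        (.inr (.inr 3)) ((univ.erase ⟨0, by omega⟩).disjSum (disjSum ∅ {0, 2}))
      · ext (i | j | c) (i' | j' | c') <;> simp [Fin.ext_iff, -Fin.val_eq_zero_iff]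
        all_goals omega
      all_goals simp +contextual [Fin.ext_iff, -Fin.val_eq_zero_iff]
    · apply eraseStep_of_cut card_constrStage_vertices (.inl ⟨j, by omega⟩) (.inl ⟨j + 1, by omega⟩)
        (.inr (.inr 0)) ((univ.erase ⟨j + 1, by omega⟩).disjSum (disjSum ∅ {2, 3}))
      · ext (i | j | c) (i' | j' | c') <;> simp [Fin.ext_iff, -Fin.val_eq_zero_iff]
        all_goals omega
      all_goals simp +contextual [Fin.ext_iff, -Fin.val_eq_zero_iff]
      all_goals omega
  · apply eraseStep_of_cut card_constrStage_vertices (.inr (.inr 0)) (.inl ⟨j + 1, by omega⟩)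
      (.inr (.inr 3)) ((univ.erase ⟨j + 1, by omega⟩).disjSum (disjSum ∅ {0, 2}))
    · ext (i | j | c) (i' | j' | c') <;> simp [Fin.ext_iff, -Fin.val_eq_zero_iff]
      all_goals omega
    all_goals simp +contextual [Fin.ext_iff, -Fin.val_eq_zero_iff]
    all_goals omega

theorem eraseStep_constrStage_fan₂ {m : ℕ} (hm : m < 2 * k + 1) :
    EraseStep (k + 3) (k + 3) (constrStage k 0 0 (m + 1)) (constrStage k 0 0 m) := by
  obtain ⟨j, rfl | rfl⟩ := Nat.even_or_odd' m
  · rcases j with _ | j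
    · apply eraseStep_of_cut card_constrStage_vertices (.inr (.inr 1)) (.inr (.inl ⟨0, by omega⟩))
        (.inr (.inr 3)) (disjSum ∅ ((univ.erase ⟨0, by omega⟩).disjSum {0, 1, 2}))
      · ext (i | j | c) (i' | j' | c') <;> simp [Fin.ext_iff, -Fin.val_eq_zero_iff]
        all_goals omega
      all_goals simp +contextual [Fin.ext_iff, -Fin.val_eq_zero_iff, -empty_disjSum]
    · apply eraseStep_of_cut card_constrStage_vertices (.inr (.inl ⟨j, by omega⟩))
        (.inr (.inl ⟨j + 1, by omega⟩)) (.inr (.inr 1))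
        (disjSum ∅ ((univ.erase ⟨j + 1, by omega⟩).disjSum {0, 2, 3}))
      · ext (i | j | c) (i' | j' | c') <;> simp [Fin.ext_iff, -Fin.val_eq_zero_iff]
        all_goals omega
      all_goals simp +contextual [Fin.ext_iff, -Fin.val_eq_zero_iff, -empty_disjSum]
      all_goals omega
  · apply eraseStep_of_cut card_constrStage_vertices (.inr (.inr 1)) (.inr (.inl ⟨j + 1, by omega⟩))
      (.inr (.inr 3)) (disjSum ∅ ((univ.erase ⟨j + 1, by omega⟩).disjSum {0, 1, 2}))
    · ext (i | j | c) (i' | j' | c') <;> simp [Fin.ext_iff, -Fin.val_eq_zero_iff]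
      all_goals omega
    all_goals simp +contextual [Fin.ext_iff, -Fin.val_eq_zero_iff, -empty_disjSum]
    all_goals omega

theorem constrStage_zero : constrStage k 0 0 0 = ⊥ := by
  ext (i | j | c) (i' | j' | c') <;> simp

theorem constrGraph_eq_constrStage :
    ConstrGraph (k + 3) = constrStage k 4 (2 * k + 3) (2 * k + 1) := by
  ext (i | j | c) (i' | j' | c') <;> simp [ConstrGraph, Fin.ext_iff, -Fin.val_eq_zero_iff]
  all_goals omega

end ConstrStage

theorem erasableIn_constrGraph (k : ℕ) :
    ErasableIn (k + 3) (k + 3) (0 + (2 * k + 1) + (2 * k + 3) + 4) (ConstrGraph (k + 3)) := by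
  have fan₂ : ErasableIn (k + 3) (k + 3) (0 + (2 * k + 1)) (constrStage k 0 0 (2 * k + 1)) :=
    .of_steps (constrStage_zero ▸ .bot) fun m hm => eraseStep_constrStage_fan₂ hm
  have fan₁ : ErasableIn (k + 3) (k + 3) (0 + (2 * k + 1) + (2 * k + 3))
      (constrStage k 0 (2 * k + 3) (2 * k + 1)) :=
    .of_steps (f := fun m => constrStage k 0 m (2 * k + 1)) fan₂
      fun m hm => eraseStep_constrStage_fan₁ hm
  rw [constrGraph_eq_constrStage]
  exact .of_steps (f := fun n => constrStage k n (2 * k + 3) (2 * k + 1)) fan₁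
    fun n hn => eraseStep_constrStage_cycle hn

/-- For `s > 2`, the above graph on `2s+1` vertices is erasable and has exactly
`4s−4` edges. -/
theorem constrGraph_erasable (s : ℕ) (hs : 2 < s) :
    Erasable s s (ConstrGraph s) ∧ (ConstrGraph s).edgeSet.ncard = 4 * s - 4 := by
  obtain ⟨k, rfl⟩ : ∃ k, s = k + 3 := ⟨s - 3, by omega⟩
  have h := erasableIn_constrGraph k
  exact ⟨h.erasable, by rw [h.ncard_edgeSet]; omega⟩
end

section
/- For all integers 2 < s ≤ t, wsat(s+t+2, K_{s,t}) ≥ C(s+t+2, 2) − 4(s+t) + 1. -/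
open SimpleGraph

/-!
A maximal `K_{s,t}`-free graph is weakly saturated, since each missing edge already closes a
copy of `K_{s,t}` in it; so `wsat` is attained.

For the bound, number the vertices by distinct rationals `x v`, and for a polynomial `p` and a
vertex `j` let the star vector of `p` at `j` in `ℚ^{Sym2 V}` put `p(x i) (x j - x i)` on each
edge `{i, j}`. Let `U` be spanned by the star vectors of `1, X, X²` and the unit vectors of the
loops; as the star vectors of `1` sum to zero, `dim U < 4n`. If a copy of `K_{s,t}` with parts
`A, B` misses the vertices `z₁, z₂` and `p = (X - x z₁)(X - x z₂)`, then
`∑_{j ∈ B} p(x j) • (star vector of p at j) ∈ U` is `p(x i) p(x k) (x k - x i)` on the edges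
`{i, k}` with `i ∈ A`, `k ∈ B`, and zero elsewhere. So modulo `U` each edge of a copy is in the
span of the other edges of the copy, no step of the saturation process enlarges the span of the
edge vectors, and a weakly saturated graph has at least `dim (ℚ^{Sym2 V} / U) > C(n,2) - 3n`
edges.
-/

section Completion

variable {W V : Type*} {F : SimpleGraph W}

def IsCompletable (F : SimpleGraph W) (H : SimpleGraph V) : Prop :=
  ∃ (m : ℕ) (c : ℕ → SimpleGraph V), c 0 = H ∧ c m = ⊤ ∧ ∀ i < m, AddStep F (c i) (c (i + 1))

lemma isCompletable_top : IsCompletable F (⊤ : SimpleGraph V) :=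
  ⟨0, fun _ => ⊤, rfl, rfl, fun _ h => absurd h (Nat.not_lt_zero _)⟩

lemma IsCompletable.of_addStep {H H' : SimpleGraph V} (hstep : AddStep F H H')
    (h : IsCompletable F H') : IsCompletable F H := by
  obtain ⟨m, c, hc0, hcm, hc⟩ := h
  refine ⟨m + 1, fun | 0 => H | i + 1 => c i, rfl, hcm, ?_⟩
  rintro (_ | i) hi
  · simpa [hc0] using hstep
  · exact hc i (by omega)

lemma addStep_sup_edge_of_maximal {G H : SimpleGraph V}
    (hG : Maximal (fun G => ¬ ContainsCopy F G) G) (hGH : G ≤ H) {u v : V} (huv : u ≠ v)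
    (hH : ¬ H.Adj u v) : AddStep F H (H ⊔ edge u v) := by
  have hcopy : ContainsCopy F (G ⊔ edge u v) := by
    by_contra hfree
    have huv' : (G ⊔ edge u v).Adj u v := Or.inr ((edge_adj u v u v).2 ⟨Or.inl ⟨rfl, rfl⟩, huv⟩)
    exact hH (hGH (hG.2 hfree le_sup_left huv'))
  obtain ⟨f, hf⟩ := hcopy
  obtain ⟨a, b, hab, hnew⟩ : ∃ a b, F.Adj a b ∧ ¬ G.Adj (f a) (f b) := by
    by_contra! hold
    exact hG.1 ⟨f, hold⟩
  refine ⟨s(u, v), hH, ?_, f, fun a b hab => sup_le_sup_right hGH _ (hf a b hab), a, b, hab, ?_⟩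
  · rw [edgeSet_sup, edgeSet_edge,
      sdiff_eq_left.2 (Set.disjoint_singleton_left.2 (by simpa using huv)), Set.union_singleton]
  · have hedge := (hf a b hab).resolve_left hnew
    rw [edge_adj] at hedge
    rcases hedge.1 with ⟨rfl, rfl⟩ | ⟨rfl, rfl⟩
    · rfl
    · exact Sym2.eq_swap

lemma isCompletable_of_maximal [Finite V] {G : SimpleGraph V}
    (hG : Maximal (fun G => ¬ ContainsCopy F G) G) {H : SimpleGraph V} (hGH : G ≤ H) :
    IsCompletable F H := by
  induction H using WellFoundedGT.induction with
  | _ H ih =>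
    by_cases htop : H = ⊤
    · exact htop ▸ isCompletable_top
    obtain ⟨u, v, huv, hH⟩ : ∃ u v, u ≠ v ∧ ¬ H.Adj u v := by
      by_contra! h
      exact htop (eq_top_iff.2 fun u v huv => h u v huv)
    exact (ih _ (H.lt_sup_edge u v huv hH) (hGH.trans le_sup_left)).of_addStep
      (addStep_sup_edge_of_maximal hG hGH huv hH)

lemma exists_isWeaklySaturated [Finite V] (hF : ¬ ContainsCopy F (⊥ : SimpleGraph V)) :
    ∃ G : SimpleGraph V, IsWeaklySaturated F G := by
  obtain ⟨G, -, hG⟩ :=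
    (Set.toFinite {G : SimpleGraph V | ¬ ContainsCopy F G}).exists_le_maximal hF
  exact ⟨G, hG.1, isCompletable_of_maximal hG le_rfl⟩

lemma exists_ncard_eq_wsat {n : ℕ} (h : ∃ G : SimpleGraph (Fin n), IsWeaklySaturated F G) :
    ∃ G : SimpleGraph (Fin n), IsWeaklySaturated F G ∧ G.edgeSet.ncard = wsat n F :=
  let ⟨G, hG⟩ := h
  Nat.sInf_mem (s := {m | ∃ G : SimpleGraph (Fin n), IsWeaklySaturated F G ∧ G.edgeSet.ncard = m})
    ⟨_, G, hG, rfl⟩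

end Completion

section LinearAlgebraMethod

open Submodule

variable {K M : Type*} [Field K] [AddCommGroup M] [Module K M]

lemma Set.Finite.finrank_span_le_ncard [FiniteDimensional K M] {s : Set M} (hs : s.Finite) :
    Module.finrank K (span K s) ≤ s.ncard := by
  have := hs.fintype
  rw [Set.ncard_eq_toFinset_card']
  exact finrank_span_le_card s

lemma map_single_mem_span_image {ι : Type*} [Fintype ι] [DecidableEq ι] (L : (ι → K) →ₗ[K] M)
    {w : ι → K} (hw : L w = 0) {e : ι} (he : w e ≠ 0) {S : Set ι}
    (hS : ∀ i ≠ e, w i ≠ 0 → i ∈ S) :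
    L (Pi.single e 1) ∈ span K ((fun i => L (Pi.single i 1)) '' S) := by
  have hsingle : ∀ i, L (Pi.single i (w i)) = w i • L (Pi.single i 1) := fun i => by
    rw [← map_smul, ← Pi.single_smul', smul_eq_mul, mul_one]
  have hrel : w e • L (Pi.single e 1) = -∑ i ∈ Finset.univ.erase e, w i • L (Pi.single i 1) := by
    rw [eq_neg_iff_add_eq_zero,
      Finset.add_sum_erase _ (fun i => w i • L (Pi.single i 1)) (Finset.mem_univ e)]
    simp only [← hsingle, ← map_sum, Finset.univ_sum_single, hw]
  rw [← smul_mem_iff _ he, hrel]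
  refine neg_mem (sum_mem fun i hi => ?_)
  by_cases hwi : w i = 0
  · simp [hwi]
  · exact smul_mem _ _ (subset_span ⟨i, hS i (Finset.ne_of_mem_erase hi) hwi, rfl⟩)

variable {W V : Type*}

variable (K) in
def IsCopyDependent (F : SimpleGraph W) (π : Sym2 V → M) : Prop :=
  ∀ f : W ↪ V, ∀ e ∈ (F.map f).edgeSet, π e ∈ span K (π '' ((F.map f).edgeSet \ {e}))

variable {F : SimpleGraph W} {π : Sym2 V → M}

lemma AddStep.span_image_edgeSet_le (hπ : IsCopyDependent K F π) {H H' : SimpleGraph V}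
    (h : AddStep F H H') : span K (π '' H'.edgeSet) ≤ span K (π '' H.edgeSet) := by
  obtain ⟨e, -, hE, f, hf, a, b, hab, rfl⟩ := h
  have hcopy : (F.map f).edgeSet \ {s(f a, f b)} ⊆ H.edgeSet := by
    intro e' ⟨he', hne⟩
    have he'H' : e' ∈ H'.edgeSet :=
      edgeSet_mono ((map_le_iff_le_comap f F H').2 fun a b hab => hf a b hab) he'
    rw [hE] at he'H'
    exact he'H'.resolve_left hne
  rw [hE, Set.image_insert_eq, span_insert]
  refine sup_le ((span_singleton_le_iff_mem _ _).2 ?_) le_rfl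
  exact span_mono (Set.image_mono hcopy) (hπ f _ (map_adj_apply.2 hab))

lemma IsCompletable.span_image_edgeSet_top_le (hπ : IsCopyDependent K F π) {H : SimpleGraph V}
    (h : IsCompletable F H) :
    span K (π '' (⊤ : SimpleGraph V).edgeSet) ≤ span K (π '' H.edgeSet) := by
  obtain ⟨m, c, rfl, hcm, hc⟩ := h
  suffices ∀ i ≤ m, span K (π '' (c i).edgeSet) ≤ span K (π '' (c 0).edgeSet) from
    hcm ▸ this m le_rfl
  intro i
  induction i with
  | zero => exact fun _ => le_rfl
  | succ i ih => exact fun hi => ((hc i hi).span_image_edgeSet_le hπ).trans (ih (by omega))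

theorem IsWeaklySaturated.finrank_span_le_ncard [Finite V] [FiniteDimensional K M]
    {G : SimpleGraph V} (hG : IsWeaklySaturated F G) (hπ : IsCopyDependent K F π) :
    Module.finrank K (span K (π '' (⊤ : SimpleGraph V).edgeSet)) ≤ G.edgeSet.ncard :=
  calc _ ≤ Module.finrank K (span K (π '' G.edgeSet)) :=
        Submodule.finrank_mono (IsCompletable.span_image_edgeSet_top_le hπ hG.2)
    _ ≤ (π '' G.edgeSet).ncard := (G.edgeSet.toFinite.image π).finrank_span_le_ncard
    _ ≤ G.edgeSet.ncard := Set.ncard_image_le G.edgeSet.toFinite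

end LinearAlgebraMethod

section StarVectors

open Polynomial Submodule

variable {K : Type*} [Field K] {V : Type*} [DecidableEq V] (x : V → K)

def starVector (p : K[X]) (j : V) : Sym2 V → K :=
  Sym2.lift ⟨fun i k => (if k = j then p.eval (x i) * (x j - x i) else 0) +
    (if i = j then p.eval (x k) * (x j - x k) else 0), fun _ _ => add_comm _ _⟩

@[simp] lemma starVector_mk (p : K[X]) (j i k : V) :
    starVector x p j s(i, k) = (if k = j then p.eval (x i) * (x j - x i) else 0) +
      (if i = j then p.eval (x k) * (x j - x k) else 0) := rfl

lemma starVector_eq_sum_coeff {p : K[X]} {d : ℕ} (hp : p.natDegree ≤ d) (j : V) :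
    starVector x p j = ∑ r : Fin (d + 1), p.coeff r • starVector x (X ^ (r : ℕ)) j := by
  funext e
  induction e using Sym2.ind with
  | _ i k =>
    simp only [starVector_mk, eval_eq_sum_range' (Nat.lt_succ_of_le hp), Finset.sum_apply,
      Pi.smul_apply, smul_eq_mul, eval_pow, eval_X,
      ← Fin.sum_univ_eq_sum_range (fun r => p.coeff r * _)]
    split_ifs <;> simp [Finset.sum_add_distrib, Finset.sum_mul, mul_add, mul_assoc]

lemma sum_starVector_smul_apply (B : Finset V) (c : V → K) (p : K[X]) (i k : V) :
    (∑ j ∈ B, c j • starVector x p j) s(i, k) =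
      (if k ∈ B then c k * (p.eval (x i) * (x k - x i)) else 0) +
      (if i ∈ B then c i * (p.eval (x k) * (x i - x k)) else 0) := by
  simp only [Finset.sum_apply, Pi.smul_apply, smul_eq_mul, starVector_mk, mul_add, mul_ite,
    mul_zero, Finset.sum_add_distrib, Finset.sum_ite_eq]

/-- The unit vectors of the loops `s(v, v)` are included so that loops vanish modulo
`starSpan x d`. -/
noncomputable def starGenerator (d : ℕ) : V × Fin (d + 1) ⊕ V → (Sym2 V → K)
  | .inl (j, r) => starVector x (X ^ (r : ℕ)) j
  | .inr v => Pi.single s(v, v) 1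

def starSpan (d : ℕ) : Submodule K (Sym2 V → K) := span K (Set.range (starGenerator x d))

lemma starVector_mem_starSpan {p : K[X]} {d : ℕ} (hp : p.natDegree ≤ d) (j : V) :
    starVector x p j ∈ starSpan x d := by
  rw [starVector_eq_sum_coeff x hp]
  exact sum_mem fun r _ => smul_mem _ _ (subset_span ⟨.inl (j, r), rfl⟩)

lemma single_diag_mem_starSpan (d : ℕ) (v : V) : Pi.single s(v, v) 1 ∈ starSpan x d :=
  subset_span ⟨.inr v, rfl⟩

variable [Fintype V]

lemma sum_starVector_one : ∑ j, starVector x 1 j = 0 := by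
  funext e
  induction e using Sym2.ind with
  | _ i k => simp [Finset.sum_add_distrib]

lemma not_linearIndependent_starGenerator [Nonempty V] (d : ℕ) :
    ¬ LinearIndependent K (starGenerator x d) := by
  intro hli
  obtain ⟨v⟩ := ‹Nonempty V›
  have hrel : ∑ i, Sum.elim (fun q : V × Fin (d + 1) => if q.2 = 0 then (1 : K) else 0) 0 i •
      starGenerator x d i = 0 := by
    rw [Fintype.sum_sum_type]
    simpa [Fintype.sum_prod_type, Fin.sum_univ_succ, starGenerator] using sum_starVector_one x
  simpa using Fintype.linearIndependent_iff.1 hli _ hrel (.inl (v, 0))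

lemma finrank_starSpan_lt [Nonempty V] (d : ℕ) :
    Module.finrank K (starSpan x d) < (d + 2) * Fintype.card V := by
  have hlt : Set.finrank K (Set.range (starGenerator x d)) < Fintype.card (V × Fin (d + 1) ⊕ V) :=
    (finrank_range_le_card _).lt_of_ne fun h =>
      not_linearIndependent_starGenerator x d (linearIndependent_iff_card_eq_finrank_span.2 h.symm)
  simp only [Fintype.card_sum, Fintype.card_prod, Fintype.card_fin] at hlt
  exact hlt.trans_eq (by ring)

lemma span_mkQ_single_edgeSet_top (d : ℕ) :
    span K ((fun e => (starSpan x d).mkQ (Pi.single e 1)) '' (⊤ : SimpleGraph V).edgeSet) = ⊤ := by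
  have hspan : span K (Set.range fun e : Sym2 V => (Pi.single e (1 : K))) = ⊤ := by
    rw [← (Pi.basisFun K (Sym2 V)).span_eq]
    congr
    ext e : 1
    exact (Pi.basisFun_apply K (Sym2 V) e).symm
  rw [eq_top_iff, ← (starSpan x d).range_mkQ, LinearMap.range_eq_map, ← hspan, map_span, span_le]
  rintro _ ⟨_, ⟨e, rfl⟩, rfl⟩
  by_cases he : e.IsDiag
  · induction e using Sym2.ind with
    | _ v w =>
      obtain rfl : v = w := he
      simp [(Quotient.mk_eq_zero _).2 (single_diag_mem_starSpan x d v)]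
  · exact subset_span ⟨e, by simpa using he, rfl⟩

end StarVectors

lemma mem_edgeSet_map_completeBipartiteGraph {α β V : Type*} (f : α ⊕ β ↪ V) {e : Sym2 V} :
    e ∈ ((completeBipartiteGraph α β).map f).edgeSet ↔ ∃ a b, e = s(f (.inl a), f (.inr b)) := by
  induction e using Sym2.ind with
  | _ u v =>
    simp only [mem_edgeSet, map_adj]
    constructor
    · rintro ⟨a | b, a' | b', hadj, rfl, rfl⟩
      all_goals simp_all [Sym2.eq_swap]
    · rintro ⟨a, b, he⟩
      rcases Sym2.eq_iff.1 he with ⟨rfl, rfl⟩ | ⟨rfl, rfl⟩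
      · exact ⟨.inl a, .inr b, by simp, rfl, rfl⟩
      · exact ⟨.inr b, .inl a, by simp, rfl, rfl⟩

section CompleteBipartite

open Polynomial Submodule

variable {K : Type*} [Field K] {V : Type*} [DecidableEq V]

noncomputable def crossVector (x : V → K) (p : K[X]) (B : Finset V) : Sym2 V → K :=
  ∑ j ∈ B, p.eval (x j) • starVector x p j

lemma crossVector_mem_starSpan (x : V → K) {p : K[X]} {d : ℕ} (hp : p.natDegree ≤ d)
    (B : Finset V) : crossVector x p B ∈ starSpan x d :=
  sum_mem fun j _ => smul_mem _ _ (starVector_mem_starSpan x hp j)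

lemma crossVector_mk_ne_zero_iff {x : V → K} (hx : Function.Injective x) (p : K[X])
    (B : Finset V) (i k : V) :
    crossVector x p B s(i, k) ≠ 0 ↔
      (i ∈ B ↔ k ∉ B) ∧ p.eval (x i) ≠ 0 ∧ p.eval (x k) ≠ 0 := by
  rw [crossVector, sum_starVector_smul_apply]
  by_cases hi : i ∈ B <;> by_cases hk : k ∈ B
  · simp only [hi, hk, if_true, not_true, iff_false, false_and, not_not]
    ring
  · have hne : x i - x k ≠ 0 := sub_ne_zero.2 (hx.ne (by rintro rfl; exact hk hi))
    simp [hi, hk, hne]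
  · have hne : x k - x i ≠ 0 := sub_ne_zero.2 (hx.ne (by rintro rfl; exact hi hk))
    simp [hi, hk, hne, and_comm]
  · simp [hi, hk]

theorem isCopyDependent_mkQ_single_completeBipartiteGraph {α β : Type*} [Fintype α] [Fintype β]
    [Fintype V] {x : V → K} (hx : Function.Injective x) {d : ℕ}
    (hV : Fintype.card V ≤ Fintype.card α + Fintype.card β + d) :
    IsCopyDependent K (completeBipartiteGraph α β)
      fun e => (starSpan x d).mkQ (Pi.single e 1) := by
  intro f e he
  set p : K[X] := ∏ z ∈ (Finset.univ.map f)ᶜ, (X - C (x z))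
  have hdeg : p.natDegree ≤ d := by
    simp only [p, natDegree_finsetProd_X_sub_C_eq_card, Finset.card_compl, Finset.card_map,
      Finset.card_univ, Fintype.card_sum]
    omega
  have hroot : ∀ v, p.eval (x v) ≠ 0 ↔ ∃ c, f c = v := by
    intro v
    simp only [p, eval_prod, Finset.prod_ne_zero_iff, eval_sub, eval_X, eval_C, sub_ne_zero,
      hx.ne_iff]
    constructor
    · intro h
      by_contra hv
      exact h v (by simpa using hv) rfl
    · rintro ⟨c, rfl⟩ z hz rfl
      simp at hz
  set B := Finset.univ.image (fun b => f (.inr b))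
  have hsupp : ∀ q, crossVector x p B q ≠ 0 ↔
      q ∈ ((completeBipartiteGraph α β).map f).edgeSet := by
    intro q
    induction q using Sym2.ind with
    | _ i k =>
      rw [crossVector_mk_ne_zero_iff hx, hroot, hroot, mem_edgeSet_map_completeBipartiteGraph]
      constructor
      · rintro ⟨hB, ⟨a | b, rfl⟩, ⟨a' | b', rfl⟩⟩ <;> simp [B] at hB ⊢
      · rintro ⟨a, b, h⟩
        rcases Sym2.eq_iff.1 h with ⟨rfl, rfl⟩ | ⟨rfl, rfl⟩ <;> simp [B]
  exact map_single_mem_span_image _ ((Quotient.mk_eq_zero _).2 (crossVector_mem_starSpan x hdeg B))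
    ((hsupp e).2 he) fun q hqe hq => ⟨(hsupp q).1 hq, hqe⟩

end CompleteBipartite

theorem IsWeaklySaturated.choose_two_add_one_le_ncard_add {α β V : Type*} [Fintype α]
    [Fintype β] [Fintype V] [Nonempty V] {d : ℕ}
    (hV : Fintype.card V ≤ Fintype.card α + Fintype.card β + d) {G : SimpleGraph V}
    (hG : IsWeaklySaturated (completeBipartiteGraph α β) G) :
    (Fintype.card V).choose 2 + 1 ≤ G.edgeSet.ncard + (d + 1) * Fintype.card V := by
  classical
  set x : V → ℚ := fun v => (Fintype.equivFin V v : ℕ)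
  have hx : Function.Injective x := fun v w h =>
    (Fintype.equivFin V).injective (Fin.ext (Nat.cast_injective h))
  have hrank := hG.finrank_span_le_ncard (isCopyDependent_mkQ_single_completeBipartiteGraph hx hV)
  rw [span_mkQ_single_edgeSet_top, finrank_top] at hrank
  have hdim := (starSpan x d).finrank_quotient_add_finrank
  rw [Module.finrank_fintype_fun_eq_card, Sym2.card, Nat.choose_succ_succ,
    Nat.choose_one_right] at hdim
  have hlt := finrank_starSpan_lt x d
  linarith

theorem choose_two_add_one_le_wsat_add {α β : Type*} [Fintype α] [Fintype β] [Nonempty α]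
    [Nonempty β] {n d : ℕ} (hn : 0 < n) (hV : n ≤ Fintype.card α + Fintype.card β + d) :
    n.choose 2 + 1 ≤ wsat n (completeBipartiteGraph α β) + (d + 1) * n := by
  have : Nonempty (Fin n) := ⟨⟨0, hn⟩⟩
  have hfree : ¬ ContainsCopy (completeBipartiteGraph α β) (⊥ : SimpleGraph (Fin n)) := by
    rintro ⟨f, hf⟩
    exact hf (.inl (Classical.arbitrary α)) (.inr (Classical.arbitrary β)) (by simp)
  obtain ⟨G, hG, hcard⟩ := exists_ncard_eq_wsat (exists_isWeaklySaturated hfree)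
  rw [← hcard]
  simpa using hG.choose_two_add_one_le_ncard_add (by simpa using hV)

/-- For `2 < s ≤ t`, `wsat(s+t+2, K_{s,t}) ≥ C(s+t+2,2) − 4(s+t) + 1`. -/
theorem wsat_Kst_lower_j2 (s t : ℕ) (hs : 2 < s) (hst : s ≤ t) :
    (wsat (s + t + 2) (completeBipartiteGraph (Fin s) (Fin t)) : ℤ) ≥
      ((s + t + 2).choose 2 : ℤ) - 4 * ((s : ℤ) + t) + 1 := by
  have : Nonempty (Fin s) := ⟨⟨0, by omega⟩⟩
  have : Nonempty (Fin t) := ⟨⟨0, by omega⟩⟩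
  have := choose_two_add_one_le_wsat_add (α := Fin s) (β := Fin t) (d := 2) (n := s + t + 2)
    (by omega) (by simp)
  omega
end

section
/- Let j ≥ 2 and let G be a j-erasable graph on n vertices. Then G contains no (j+2)-connected subgraph. -/
open SimpleGraph
/-- One `j`-erase step: delete an edge `e` which is the unique edge between two
disjoint vertex sets `V₁`, `V₂` covering all but `j` vertices (when the graph has
exactly `j+1` vertices, any edge may be deleted). -/
def JEraseStep (j : ℕ) {V : Type*} (G G' : SimpleGraph V) : Prop :=
  ∃ e ∈ G.edgeSet, G'.edgeSet = G.edgeSet \ {e} ∧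
    (Nat.card V = j + 1 ∨
      ∃ V1 V2 : Set V, Disjoint V1 V2 ∧ V1.ncard + V2.ncard + j = Nat.card V ∧
        (∃ x ∈ V1, ∃ y ∈ V2, e = s(x, y)) ∧
        ∀ x ∈ V1, ∀ y ∈ V2, G.Adj x y → s(x, y) = e)

/-- `G` is `j`-erasable: some sequence of `j`-erase steps empties its edge set. -/
def JErasable (j : ℕ) {V : Type*} (G : SimpleGraph V) : Prop :=
  ∃ (m : ℕ) (c : ℕ → SimpleGraph V), c 0 = G ∧ c m = ⊥ ∧
    ∀ i < m, JEraseStep j (c i) (c (i + 1))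

/-- A graph is `k`-connected if it has more than `k` vertices and remains connected
after deleting any `k−1` vertices. -/
def KConnected (k : ℕ) {V : Type*} (G : SimpleGraph V) : Prop :=
  k < Nat.card V ∧ ∀ S : Set V, S.ncard = k - 1 → (G.induce Sᶜ).Connected

private lemma reach_pred {α : Type*} {Γ : SimpleGraph α} {p : α → Prop}
    (h : ∀ u v, Γ.Adj u v → (p u ↔ p v)) {u v : α} (hr : Γ.Reachable u v) :
    p u ↔ p v := by
  obtain ⟨w⟩ := hr
  induction w with
  | nil => exact Iff.rfl
  | cons h' _ ih => exact (h _ _ h').trans ih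

private lemma find_step (j : ℕ) {V : Type*} (E : Set (Sym2 V)) (hE : E.Nonempty) :
    ∀ (m : ℕ) (c : ℕ → SimpleGraph V), c m = ⊥ →
      (∀ i < m, JEraseStep j (c i) (c (i + 1))) → E ⊆ (c 0).edgeSet →
      ∃ (Gi : SimpleGraph V) (e : Sym2 V), e ∈ E ∧ E ⊆ Gi.edgeSet ∧
        (Nat.card V = j + 1 ∨
          ∃ V1 V2 : Set V, Disjoint V1 V2 ∧ V1.ncard + V2.ncard + j = Nat.card V ∧
            (∃ x ∈ V1, ∃ y ∈ V2, e = s(x, y)) ∧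
            ∀ x ∈ V1, ∀ y ∈ V2, Gi.Adj x y → s(x, y) = e) := by
  intro m
  induction m with
  | zero =>
    intro c hbot _ hsub
    obtain ⟨e, he⟩ := hE
    have h1 := hsub he
    rw [hbot] at h1
    simp at h1
  | succ m ih =>
    intro c hbot hsteps hsub
    obtain ⟨e, he, heq, hside⟩ := hsteps 0 (Nat.succ_pos m)
    by_cases heE : e ∈ E
    · exact ⟨c 0, e, heE, hsub, hside⟩
    · refine ih (fun i => c (i + 1)) hbot (fun i hi => hsteps (i + 1) (by omega)) ?_
      intro f hf
      rw [heq]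
      exact ⟨hsub hf, fun hfe => heE (hfe ▸ hf)⟩

private lemma count3 {n j : ℕ} (W V1 V2 : Set (Fin n)) (hdisj : Disjoint V1 V2)
    (hsum : V1.ncard + V2.ncard + j = n) (hW : j + 2 < W.ncard) :
    j + 3 ≤ (W ∩ V1).ncard + (W ∩ V2).ncard + (W \ (V1 ∪ V2)).ncard ∧
      (W \ (V1 ∪ V2)).ncard ≤ j := by
  have hcompl : (V1 ∪ V2)ᶜ.ncard = j := by
    have h1 := Set.ncard_add_ncard_compl (V1 ∪ V2)
    rw [Set.ncard_union_eq hdisj] at h1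
    have h2 : Nat.card (Fin n) = n := by simp
    omega
  have hC : (W \ (V1 ∪ V2)).ncard ≤ j := by
    rw [← hcompl]
    exact Set.ncard_le_ncard (fun v hv => hv.2) (Set.toFinite _)
  have hsub : W ⊆ ((W ∩ V1) ∪ (W ∩ V2)) ∪ (W \ (V1 ∪ V2)) := by
    intro v hv
    by_cases h1 : v ∈ V1
    · exact Or.inl (Or.inl ⟨hv, h1⟩)
    · by_cases h2 : v ∈ V2
      · exact Or.inl (Or.inr ⟨hv, h2⟩)
      · exact Or.inr ⟨hv, fun h => h.elim h1 h2⟩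
  have h3 := Set.ncard_le_ncard hsub (Set.toFinite _)
  have h4 := Set.ncard_union_le ((W ∩ V1) ∪ (W ∩ V2)) (W \ (V1 ∪ V2))
  have h5 := Set.ncard_union_le (W ∩ V1) (W ∩ V2)
  exact ⟨by omega, hC⟩

private lemma aux_main {n j : ℕ} {G : SimpleGraph (Fin n)} (H : G.Subgraph)
    (hWcard : j + 2 < H.verts.ncard)
    (hconn : ∀ S : Set ↥H.verts, S.ncard = j + 1 → (H.coe.induce Sᶜ).Connected)
    (Gi : SimpleGraph (Fin n)) (hE : H.edgeSet ⊆ Gi.edgeSet)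
    (V1 V2 : Set (Fin n)) (hdisj : Disjoint V1 V2)
    (hsum : V1.ncard + V2.ncard + j = n)
    (x y : Fin n) (hx : x ∈ V1) (hy : y ∈ V2) (hxy : s(x, y) ∈ H.edgeSet)
    (huniq : ∀ u ∈ V1, ∀ v ∈ V2, Gi.Adj u v → s(u, v) = s(x, y))
    (hA2 : 2 ≤ (H.verts ∩ V1).ncard) : False := by
  set W := H.verts with hW
  set A := W ∩ V1 with hAdef
  set B := W ∩ V2 with hBdef
  set C := W \ (V1 ∪ V2) with hCdef
  obtain ⟨hcount, hCj⟩ := count3 W V1 V2 hdisj hsum hWcard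
  rw [← hAdef, ← hBdef, ← hCdef] at hcount
  rw [← hCdef] at hCj
  have hxW : x ∈ W := H.edge_vert (Subgraph.mem_edgeSet.mp hxy)
  have hyW : y ∈ W := H.edge_vert (Subgraph.mem_edgeSet.mp hxy).symm
  have hxyne : x ≠ y := fun h => Set.disjoint_left.mp hdisj hx (h ▸ hy)
  -- pick a second vertex of A
  obtain ⟨a, haA, hax⟩ := Set.exists_ne_of_one_lt_ncard (s := A) (by omega) x
  -- choose the extra deleted vertices
  have hABeq : (A ∪ B).ncard = A.ncard + B.ncard :=
    Set.ncard_union_eq (hdisj.mono (Set.inter_subset_right) (Set.inter_subset_right))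
  have hABsub : A ∪ B ⊆ (((A ∪ B) \ {x, y, a}) ∪ {x, y, a}) := by
    intro v hv
    by_cases h : v ∈ ({x, y, a} : Set (Fin n))
    · exact Or.inr h
    · exact Or.inl ⟨hv, h⟩
  have h6 := Set.ncard_le_ncard hABsub (Set.toFinite _)
  have h7 := Set.ncard_union_le ((A ∪ B) \ {x, y, a}) ({x, y, a} : Set (Fin n))
  have h8 : ({x, y, a} : Set (Fin n)).ncard ≤ 3 := by
    have := Set.ncard_insert_le x ({y, a} : Set (Fin n))
    have := Set.ncard_insert_le y ({a} : Set (Fin n))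
    have := Set.ncard_singleton a
    omega
  obtain ⟨T, hTD, hTcard⟩ :=
    Set.exists_subset_card_eq (s := (A ∪ B) \ {x, y, a}) (n := j - C.ncard) (by omega)
  -- the deleted set S0
  set S0 : Set (Fin n) := insert x (C ∪ T) with hS0def
  have hxC : x ∉ C := fun h => h.2 (Or.inl hx)
  have hxT : x ∉ T := fun h => (hTD h).2 (Or.inl rfl)
  have hyC : y ∉ C := fun h => h.2 (Or.inr hy)
  have hyT : y ∉ T := fun h => (hTD h).2 (Or.inr (Or.inl rfl))
  have haC : a ∉ C := fun h => h.2 (Or.inl haA.2)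
  have haT : a ∉ T := fun h => (hTD h).2 (Or.inr (Or.inr rfl))
  have hCT : Disjoint C T := by
    rw [Set.disjoint_left]
    intro v hvC hvT
    rcases (hTD hvT).1 with h | h
    · exact hvC.2 (Or.inl h.2)
    · exact hvC.2 (Or.inr h.2)
  have hS0card : S0.ncard = j + 1 := by
    rw [hS0def, Set.ncard_insert_of_notMem (fun h => h.elim hxC hxT),
      Set.ncard_union_eq hCT, hTcard]
    omega
  have hS0W : S0 ⊆ W := by
    intro v hv
    rcases hv with rfl | hv
    · exact hxW
    · rcases hv with hv | hv
      · exact hv.1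
      · rcases (hTD hv).1 with h | h
        · exact h.1
        · exact h.1
  have haS0 : a ∉ S0 := by
    intro h
    rcases h with rfl | h
    · exact hax rfl
    · exact h.elim haC haT
  have hyS0 : y ∉ S0 := by
    intro h
    rcases h with rfl | h
    · exact hxyne rfl
    · exact h.elim hyC hyT
  have hxS0 : x ∈ S0 := Or.inl rfl
  -- view S0 as a set of the subtype
  set S : Set ↥W := Subtype.val ⁻¹' S0 with hSdef
  have hScard : S.ncard = j + 1 := by
    have h1 : Subtype.val '' S = S0 := by
      rw [hSdef, Subtype.image_preimage_coe]
      exact Set.inter_eq_right.mpr hS0W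
    rw [← hS0card, ← h1, Set.ncard_image_of_injective _ Subtype.val_injective]
  have hc := hconn S hScard
  -- membership-in-V1 is preserved by adjacency
  have hpres : ∀ u v : ↥(Sᶜ), (H.coe.induce Sᶜ).Adj u v →
      ((u.1.1 : Fin n) ∈ V1 ↔ (v.1.1 : Fin n) ∈ V1) := by
    intro u v huv
    have hadj : H.Adj u.1.1 v.1.1 := huv
    have hu0S : u.1.1 ∉ S0 := u.2
    have hv0S : v.1.1 ∉ S0 := v.2
    have hu0AB : u.1.1 ∈ V1 ∪ V2 := by
      by_contra h
      exact hu0S (Or.inr (Or.inl ⟨u.1.2, h⟩))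
    have hv0AB : v.1.1 ∈ V1 ∪ V2 := by
      by_contra h
      exact hv0S (Or.inr (Or.inl ⟨v.1.2, h⟩))
    have hGiadj : Gi.Adj u.1.1 v.1.1 := (hE (Subgraph.mem_edgeSet.mpr hadj))
    constructor
    · intro h1
      by_contra h2
      have hv2 : v.1.1 ∈ V2 := hv0AB.resolve_left h2
      have := huniq _ h1 _ hv2 hGiadj
      rcases Sym2.eq_iff.mp this with ⟨h3, -⟩ | ⟨h3, h4⟩
      · exact hu0S (h3 ▸ hxS0)
      · exact Set.disjoint_left.mp hdisj h1 (h3 ▸ hy)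
    · intro h1
      by_contra h2
      have hu2 : u.1.1 ∈ V2 := hu0AB.resolve_left h2
      have := huniq _ h1 _ hu2 hGiadj.symm
      rcases Sym2.eq_iff.mp this with ⟨h3, -⟩ | ⟨h3, h4⟩
      · exact hv0S (h3 ▸ hxS0)
      · exact Set.disjoint_left.mp hdisj h1 (h3 ▸ hy)
  have hrch := hc.preconnected ⟨⟨a, haA.1⟩, haS0⟩ ⟨⟨y, hyW⟩, hyS0⟩
  have hkey := reach_pred hpres hrch
  exact Set.disjoint_left.mp hdisj (hkey.mp haA.2) hy

/-- For `j ≥ 2`, a `j`-erasable graph on `n ≥ j+1` vertices contains no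
`(j+2)`-connected subgraph. -/
theorem jErasable_no_connected_subgraph (j n : ℕ) (hj : 2 ≤ j) (hn : j + 1 ≤ n)
    (G : SimpleGraph (Fin n)) (hG : JErasable j G) :
    ∀ H : G.Subgraph, ¬ KConnected (j + 2) H.coe := by
  intro H hK
  obtain ⟨hlt, hconn⟩ := hK
  have hWcard : j + 2 < H.verts.ncard := by rwa [Nat.card_coe_set_eq] at hlt
  have hnn : H.verts.ncard ≤ n := by
    have := Set.ncard_le_ncard (Set.subset_univ H.verts) (Set.toFinite _)
    simpa [Set.ncard_univ] using this
  have hconn' : ∀ S : Set ↥H.verts, S.ncard = j + 1 → (H.coe.induce Sᶜ).Connected := by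
    intro S hS
    exact hconn S (by omega)
  -- H has at least one edge
  obtain ⟨S, -, hScard⟩ := Set.exists_subset_card_eq
    (s := (Set.univ : Set ↥H.verts)) (n := j + 1)
    (by rw [Set.ncard_univ, Nat.card_coe_set_eq]; omega)
  have hc := hconn' S hScard
  have hSc : 1 < Sᶜ.ncard := by
    have h1 := Set.ncard_add_ncard_compl S
    rw [Nat.card_coe_set_eq] at h1
    omega
  obtain ⟨u, hu⟩ : Sᶜ.Nonempty := Set.nonempty_of_ncard_ne_zero (by omega)
  obtain ⟨v, hv, hvu⟩ := Set.exists_ne_of_one_lt_ncard hSc u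
  have hreach := hc.preconnected ⟨u, hu⟩ ⟨v, hv⟩
  have hEne : H.edgeSet.Nonempty := by
    rw [Set.nonempty_iff_ne_empty]
    intro hemp
    have hnoadj : ∀ p q : ↥(Sᶜ), ¬ (H.coe.induce Sᶜ).Adj p q := by
      intro p q hpq
      have h1 : H.Adj p.1.1 q.1.1 := hpq
      have h2 : s(p.1.1, q.1.1) ∈ H.edgeSet := h1
      rw [hemp] at h2
      exact h2
    have hkey := reach_pred (p := fun z : ↥(Sᶜ) => z = ⟨u, hu⟩)
      (fun p q hpq => absurd hpq (hnoadj p q)) hreach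
    exact hvu (by simpa [Subtype.ext_iff] using hkey.mp rfl)
  obtain ⟨m, c, hc0, hcm, hsteps⟩ := hG
  obtain ⟨Gi, e, heE, hEGi, hside⟩ := find_step j H.edgeSet hEne m c hcm hsteps
    (by rw [hc0]; exact H.edgeSet_subset)
  rcases hside with hcard | ⟨V1, V2, hdisj, hsum, ⟨x, hx, y, hy, hexy⟩, huniq⟩
  · simp only [Nat.card_eq_fintype_card, Fintype.card_fin] at hcard
    omega
  · have hxyE : s(x, y) ∈ H.edgeSet := hexy ▸ heE
    have huniq' : ∀ u ∈ V1, ∀ v ∈ V2, Gi.Adj u v → s(u, v) = s(x, y) :=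
      fun u hu v hv h => hexy ▸ huniq u hu v hv h
    have hsum' : V1.ncard + V2.ncard + j = n := by
      simpa [Nat.card_eq_fintype_card] using hsum
    obtain ⟨hcount, hCj⟩ := count3 H.verts V1 V2 hdisj hsum' hWcard
    by_cases hA : 2 ≤ (H.verts ∩ V1).ncard
    · exact aux_main H hWcard hconn' Gi hEGi V1 V2 hdisj hsum' x y hx hy hxyE huniq' hA
    · have hB : 2 ≤ (H.verts ∩ V2).ncard := by omega
      refine aux_main H hWcard hconn' Gi hEGi V2 V1 hdisj.symm (by omega) y x hy hx
        (by rwa [Sym2.eq_swap]) ?_ hB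
      intro u hu v hv h
      rw [Sym2.eq_swap]
      exact (huniq' v hv u hu h.symm).trans Sym2.eq_swap
end

section
/- Fix n and j ≥ 2, and for j+1 ≤ k ≤ n let f_j(k) be the maximum number of edges of a j-erasable graph on n vertices having exactly n−k non-isolated vertices. Then: (1) f_j(k) = C(k,2) for k ≤ j+2; and (2) for k ≥ j+3, f_j(k) ≤ 1 + max over k_1, k_2 with j+1 ≤ k_1, k_2 ≤ k−1 and k_1 + k_2 = k + j of (f_j(k_1) + f_j(k_2)). -/
open SimpleGraph
/-- `f_j(k)`: the maximum number of edges of a `j`-erasable graph on `n` vertices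
with exactly `k` non-isolated vertices (i.e. `n − k` isolated vertices). -/
noncomputable def maxJErasableEdges (j n k : ℕ) : ℕ :=
  sSup {m | ∃ G : SimpleGraph (Fin n), JErasable j G ∧
    {v : Fin n | ∃ w, G.Adj v w}.ncard = k ∧ G.edgeSet.ncard = m}

/-!
Part (1): a graph with at most `j + 2` non-isolated vertices is `j`-erasable edge by edge: to
delete `xy`, take `V₁ = {x}` and hide the other neighbours of `x` (at most `j` of them) among the
`j` leftover vertices. With the bound `C(k, 2)` on the edges of any graph this gives
`f_j(k) = C(k, 2)`.

Part (2): let `xy` be the first erased edge, the unique one between `V₁ ∋ x` and `V₂ ∋ y`. The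
edges avoiding `V₂` and the remaining edges meeting `V₂` form two `j`-erasable subgraphs
(erasability is hereditary). The first misses `y`, the second misses `x` and all of `V₁`, so their
non-isolated vertices overlap only inside the `j` leftover vertices: `k₁ + k₂ ≤ k + j`. Attaching
pendant edges at isolated vertices preserves erasability, so `k₁, k₂` can be padded up to an
admissible splitting.
-/

open Relation

section

variable {V : Type*} {j : ℕ} {G H G' : SimpleGraph V}

theorem jErasable_iff_reflTransGen : JErasable j G ↔ ReflTransGen (JEraseStep j) G ⊥ := by
  constructor
  · rintro ⟨m, c, rfl, hm, hstep⟩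
    rw [← hm]
    exact (reflTransGen_of_succ_of_le (fun a b => JEraseStep j (c a) (c b))
      (fun i hi => hstep i hi.2) (Nat.zero_le m)).lift c fun _ _ h => h
  · intro h
    induction h using ReflTransGen.head_induction_on with
    | refl => exact ⟨0, fun _ => ⊥, rfl, rfl, fun _ h => absurd h (Nat.not_lt_zero _)⟩
    | @head G₀ _ hstep _ ih =>
      obtain ⟨m, c, hc0, hcm, hc⟩ := ih
      refine ⟨m + 1, Nat.rec G₀ fun i _ => c i, rfl, hcm, ?_⟩
      rintro (_ | i) hi
      · simpa [hc0] using hstep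
      · exact hc i (by omega)

theorem JEraseStep.exists_le_of_le (h : JEraseStep j G G') (hHG : H ≤ G) :
    ∃ H' ≤ G', H' = H ∨ JEraseStep j H H' := by
  obtain ⟨e, he, hG', hcut⟩ := h
  by_cases heH : e ∈ H.edgeSet
  · refine ⟨H.deleteEdges {e}, ?_, Or.inr ⟨e, heH, H.edgeSet_deleteEdges _, ?_⟩⟩
    · rw [← edgeSet_subset_edgeSet, edgeSet_deleteEdges, hG']
      exact Set.sdiff_subset_sdiff_left (edgeSet_mono hHG)
    · refine hcut.imp_right fun ⟨V1, V2, hd, hc, hxy, huniq⟩ => ⟨V1, V2, hd, hc, hxy, ?_⟩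
      exact fun x hx y hy hadj => huniq x hx y hy (hHG hadj)
  · refine ⟨H, ?_, Or.inl rfl⟩
    rw [← edgeSet_subset_edgeSet, hG', Set.subset_sdiff]
    exact ⟨edgeSet_mono hHG, Set.disjoint_singleton_right.mpr heH⟩

theorem JErasable.mono (hG : JErasable j G) (hHG : H ≤ G) : JErasable j H := by
  rw [jErasable_iff_reflTransGen] at hG ⊢
  induction hG using ReflTransGen.head_induction_on generalizing H with
  | refl => exact le_bot_iff.mp hHG ▸ ReflTransGen.refl
  | head hstep _ ih =>
    obtain ⟨H', hH', rfl | hH⟩ := hstep.exists_le_of_le hHG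
    · exact ih hH'
    · exact ReflTransGen.head hH (ih hH')

theorem jEraseStep_deleteEdges [Finite V] {x y : V} (hV : j + 1 ≤ Nat.card V)
    (hxy : G.Adj x y) (hx : (G.neighborSet x \ {y}).ncard ≤ j) :
    JEraseStep j G (G.deleteEdges {s(x, y)}) := by
  refine ⟨s(x, y), hxy, G.edgeSet_deleteEdges _, ?_⟩
  rcases hV.eq_or_lt with hV | hV
  · exact Or.inl hV.symm
  have hxy' : x ≠ y := hxy.ne
  have hNsub : G.neighborSet x \ {y} ⊆ ({x, y} : Set V)ᶜ := by
    rintro z ⟨hz, hzy⟩ (rfl | rfl)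
    exacts [G.loopless.irrefl _ hz, hzy rfl]
  have hjle : j ≤ ({x, y} : Set V)ᶜ.ncard := by
    have := Set.ncard_add_ncard_compl ({x, y} : Set V)
    rw [Set.ncard_pair hxy'] at this
    omega
  -- `W` is the set of `j` leftover vertices; it swallows all other neighbours of `x`.
  obtain ⟨W, hNW, hW, hWcard⟩ := Set.exists_subsuperset_card_eq hNsub hx hjle
  have hxW : x ∉ W := fun h => hW h (Or.inl rfl)
  have hyW : y ∉ W := fun h => hW h (Or.inr rfl)
  refine Or.inr ⟨{x}, (insert x W)ᶜ, by simp, ?_, ⟨x, rfl, y, ?_, rfl⟩, ?_⟩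
  · have := Set.ncard_add_ncard_compl (insert x W)
    rw [Set.ncard_insert_of_notMem hxW, hWcard] at this
    rw [Set.ncard_singleton]
    omega
  · simp [hxy'.symm, hyW]
  · rintro _ rfl z hz hxz
    by_contra hzy
    exact hz (Or.inr (hNW ⟨hxz, fun h => hzy (by rw [Set.mem_singleton_iff.mp h])⟩))

theorem jErasable_of_support_ncard_le [Finite V] (hV : j + 1 ≤ Nat.card V)
    (hG : G.support.ncard ≤ j + 2) : JErasable j G := by
  rw [jErasable_iff_reflTransGen]
  induction hm : G.edgeSet.ncard generalizing G with
  | zero =>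
    rw [Set.ncard_eq_zero, edgeSet_eq_empty] at hm
    exact hm ▸ ReflTransGen.refl
  | succ m ih =>
    obtain ⟨⟨x, y⟩, he⟩ := Set.nonempty_of_ncard_ne_zero (s := G.edgeSet) (by omega)
    have hxy : G.Adj x y := he
    have hN : G.neighborSet x \ {y} ⊆ G.support \ {x, y} := by
      rintro z ⟨hz, hzy⟩
      refine ⟨⟨x, G.adj_symm hz⟩, ?_⟩
      rintro (rfl | rfl)
      exacts [G.loopless.irrefl _ hz, hzy rfl]
    have hsupp : (G.support \ {x, y}).ncard = G.support.ncard - 2 := by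
      rw [Set.ncard_sdiff (Set.pair_subset (s := G.support) ⟨y, hxy⟩ ⟨x, hxy.symm⟩),
        Set.ncard_pair hxy.ne]
    refine ReflTransGen.head (jEraseStep_deleteEdges hV hxy ?_) (ih ?_ ?_)
    · have := Set.ncard_le_ncard hN
      omega
    · exact (Set.ncard_le_ncard (support_mono (G.deleteEdges_le _))).trans hG
    · rw [edgeSet_deleteEdges, Set.ncard_sdiff_singleton_of_mem he, hm, Nat.add_sub_cancel]

theorem JErasable.sup_edge [Finite V] {u v : V} (hV : j + 1 ≤ Nat.card V) (hG : JErasable j G)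
    (hu : u ∉ G.support) (hv : v ∈ G.support) : JErasable j (G ⊔ edge u v) := by
  have huv : u ≠ v := by rintro rfl; exact hu hv
  have hdel : (G ⊔ edge u v).deleteEdges {s(u, v)} = G := by
    rw [deleteEdges_sup, deleteEdges_edge (Set.mem_singleton _), sup_bot_eq, deleteEdges_eq_self,
      Set.disjoint_singleton_right]
    exact fun h => hu ⟨v, h⟩
  have hN : (G ⊔ edge u v).neighborSet u \ {v} = ∅ := by
    ext w
    simp only [mem_neighborSet, sup_adj, edge_adj, Set.mem_sdiff, Set.mem_singleton_iff,
      Set.mem_empty_iff_false, iff_false, not_and, not_not]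
    rintro (h | ⟨(⟨-, rfl⟩ | ⟨rfl, -⟩), -⟩)
    exacts [absurd ⟨w, h⟩ hu, rfl, absurd rfl huv]
  rw [jErasable_iff_reflTransGen] at hG ⊢
  refine ReflTransGen.head ?_ (hdel ▸ hG)
  exact jEraseStep_deleteEdges hV (by simp [edge_adj, huv]) (by rw [hN, Set.ncard_empty]; omega)

theorem support_sup_edge {u v : V} (huv : u ≠ v) (hv : v ∈ G.support) :
    (G ⊔ edge u v).support = insert u G.support := by
  ext w
  simp only [mem_support, sup_adj, edge_adj, Set.mem_insert_iff]
  constructor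
  · rintro ⟨x, h | ⟨⟨rfl, rfl⟩ | ⟨rfl, rfl⟩, -⟩⟩
    exacts [Or.inr ⟨x, h⟩, Or.inl rfl, Or.inr hv]
  · rintro (rfl | ⟨x, h⟩)
    exacts [⟨v, Or.inr ⟨Or.inl ⟨rfl, rfl⟩, huv⟩⟩, ⟨x, Or.inl h⟩]

theorem JErasable.exists_le_support_ncard_eq [Finite V] {t : ℕ} (hV : j + 1 ≤ Nat.card V)
    (hG : JErasable j G) (hne : G.support.Nonempty) (ht : G.support.ncard ≤ t)
    (htV : t ≤ Nat.card V) : ∃ H, G ≤ H ∧ JErasable j H ∧ H.support.ncard = t := by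
  induction t, ht using Nat.le_induction with
  | base => exact ⟨G, le_rfl, hG, rfl⟩
  | succ t _ ih =>
    obtain ⟨H, hGH, hH, hHt⟩ := ih (by omega)
    obtain ⟨v, hv⟩ := hne
    obtain ⟨u, hu⟩ : (H.supportᶜ).Nonempty := by
      rw [← Set.ncard_pos, Set.ncard_compl, hHt]
      omega
    have hvH : v ∈ H.support := support_mono hGH hv
    have huv : u ≠ v := by rintro rfl; exact hu hvH
    refine ⟨H ⊔ edge u v, hGH.trans le_sup_left, hH.sup_edge hV hu hvH, ?_⟩
    rw [support_sup_edge huv hvH, Set.ncard_insert_of_notMem hu, hHt]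

theorem edgeSet_ncard_le_choose_two_support [Finite V] (G : SimpleGraph V) :
    G.edgeSet.ncard ≤ G.support.ncard.choose 2 := by
  classical
  have : Fintype V := Fintype.ofFinite V
  have h := (G.induce G.support).card_edgeFinset_le_card_choose_two
  rwa [card_edgeFinset_induce_support, ← Set.ncard_coe_finset, coe_edgeFinset,
    Fintype.card_eq_nat_card, Nat.card_coe_set_eq] at h

theorem support_fromEdgeSet_sym2 {S : Set V} (hS : S.Nontrivial) :
    (fromEdgeSet S.sym2).support = S := by
  ext v
  simp only [mem_support, fromEdgeSet_adj, Set.mk_mem_sym2_iff]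
  refine ⟨fun ⟨_, ⟨hv, _⟩, _⟩ => hv, fun hv => ?_⟩
  obtain ⟨w, hw, hwv⟩ := hS.exists_ne v
  exact ⟨w, ⟨hv, hw⟩, hwv.symm⟩

theorem edgeSet_ncard_fromEdgeSet_sym2 [Finite V] (S : Set V) :
    (fromEdgeSet S.sym2).edgeSet.ncard = S.ncard.choose 2 := by
  classical
  have : Fintype V := Fintype.ofFinite V
  have hind : (fromEdgeSet S.sym2).induce S = ⊤ := by
    ext ⟨a, ha⟩ ⟨b, hb⟩
    simp [ha, hb, Subtype.ext_iff]
  have h := card_edgeFinset_induce_of_support_subset (G := fromEdgeSet S.sym2) (s := S)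
    (fun v ⟨_, ⟨hv, _⟩, _⟩ => hv)
  rw [← Set.ncard_coe_finset, coe_edgeFinset, ← Set.ncard_coe_finset, coe_edgeFinset, hind] at h
  rw [← h, ← coe_edgeFinset, Set.ncard_coe_finset, card_edgeFinset_top_eq_card_choose_two,
    Fintype.card_eq_nat_card, Nat.card_coe_set_eq]

theorem Set.ncard_sdiff_add_ncard_sdiff_le {α : Type*} [Finite α] (S A B : Set α) :
    (S \ A).ncard + (S \ B).ncard ≤ S.ncard + (A ∪ B)ᶜ.ncard := by
  have hunion : (S \ A ∪ S \ B).ncard ≤ S.ncard :=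
    Set.ncard_le_ncard (Set.union_subset Set.sdiff_subset Set.sdiff_subset)
  have hinter : (S \ A ∩ (S \ B)).ncard ≤ (A ∪ B)ᶜ.ncard :=
    Set.ncard_le_ncard fun v ⟨⟨_, hA⟩, ⟨_, hB⟩⟩ => by simp [hA, hB]
  have := Set.ncard_union_add_ncard_inter (S \ A) (S \ B)
  omega

theorem JEraseStep.exists_split [Finite V] (h : JEraseStep j G G') (hV : j + 2 ≤ Nat.card V) :
    ∃ G₁ ≤ G, ∃ G₂ ≤ G, G.edgeSet.ncard = G₁.edgeSet.ncard + G₂.edgeSet.ncard + 1 ∧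
      G₁.support.ncard < G.support.ncard ∧ G₂.support.ncard < G.support.ncard ∧
      G₁.support.ncard + G₂.support.ncard ≤ G.support.ncard + j := by
  obtain ⟨e, he, -, hcut⟩ := h
  obtain ⟨V₁, V₂, hdisj, hcard, ⟨x, hx, y, hy, rfl⟩, huniq⟩ := hcut.resolve_left (by omega)
  have hxy : G.Adj x y := he
  -- `G₁` keeps the edges avoiding `V₂`, `G₂` the other edges except `xy`.
  set G₁ := G.deleteEdges V₂ᶜ.sym2ᶜ
  set G₂ := (G.deleteEdges V₂ᶜ.sym2).deleteEdges {s(x, y)}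
  have hedges : G.edgeSet.ncard = G₁.edgeSet.ncard + G₂.edgeSet.ncard + 1 := by
    have he₂ : s(x, y) ∈ G.edgeSet \ V₂ᶜ.sym2 := ⟨he, fun h => h.2 hy⟩
    simp only [G₁, G₂, edgeSet_deleteEdges, Set.sdiff_compl]
    rw [add_assoc, Set.ncard_sdiff_singleton_add_one he₂,
      Set.ncard_inter_add_ncard_sdiff_eq_ncard]
  have hs₁ : G₁.support ⊆ G.support \ V₂ := by
    rintro v ⟨w, hvw⟩
    simp only [G₁, deleteEdges_adj, Set.mem_compl_iff, not_not, Set.mk_mem_sym2_iff] at hvw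
    exact ⟨⟨w, hvw.1⟩, hvw.2.1⟩
  have hs₂ : G₂.support ⊆ G.support \ V₁ := by
    rintro v ⟨w, hvw⟩
    simp only [G₂, deleteEdges_adj, Set.mk_mem_sym2_iff, Set.mem_compl_iff, not_and, not_not,
      Set.mem_singleton_iff] at hvw
    obtain ⟨⟨hvw, hV₂⟩, hne⟩ := hvw
    exact ⟨⟨w, hvw⟩, fun hv => hne (huniq v hv w (hV₂ (Set.disjoint_left.mp hdisj hv)) hvw)⟩
  have hj : (V₁ ∪ V₂)ᶜ.ncard = j := by
    have := Set.ncard_add_ncard_compl (V₁ ∪ V₂)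
    rw [Set.ncard_union_eq hdisj] at this
    omega
  have hlt₁ : (G.support \ V₂).ncard < G.support.ncard :=
    Set.ncard_lt_ncard (Set.sdiff_subset.ssubset_of_mem_notMem ⟨x, hxy.symm⟩ fun h => h.2 hy)
  have hlt₂ : (G.support \ V₁).ncard < G.support.ncard :=
    Set.ncard_lt_ncard (Set.sdiff_subset.ssubset_of_mem_notMem ⟨y, hxy⟩ fun h => h.2 hx)
  have hsum := Set.ncard_sdiff_add_ncard_sdiff_le G.support V₂ V₁
  rw [Set.union_comm, hj] at hsum
  have := Set.ncard_le_ncard hs₁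
  have := Set.ncard_le_ncard hs₂
  exact ⟨G₁, G.deleteEdges_le _, G₂, (deleteEdges_le _).trans (deleteEdges_le _), hedges,
    by omega, by omega, by omega⟩

end

section

variable {j n k : ℕ}

theorem le_maxJErasableEdges {G : SimpleGraph (Fin n)} (hG : JErasable j G) :
    G.edgeSet.ncard ≤ maxJErasableEdges j n G.support.ncard := by
  refine le_csSup ⟨n.choose 2, ?_⟩ ⟨G, hG, rfl, rfl⟩
  rintro _ ⟨H, -, -, rfl⟩
  calc H.edgeSet.ncard ≤ H.support.ncard.choose 2 := edgeSet_ncard_le_choose_two_support H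
    _ ≤ n.choose 2 := Nat.choose_le_choose 2 (by simpa using Set.ncard_le_card H.support)

theorem maxJErasableEdges_le {c : ℕ}
    (h : ∀ G : SimpleGraph (Fin n), JErasable j G → G.support.ncard = k → G.edgeSet.ncard ≤ c) :
    maxJErasableEdges j n k ≤ c :=
  csSup_le' fun _ ⟨G, hG, hk, hm⟩ => hm ▸ h G hG hk

theorem JErasable.edgeSet_ncard_le_maxJErasableEdges {G : SimpleGraph (Fin n)} {t : ℕ}
    (hG : JErasable j G) (hn : j + 1 ≤ n) (ht : G.support.ncard ≤ t) (htn : t ≤ n) :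
    G.edgeSet.ncard ≤ maxJErasableEdges j n t := by
  have hchoose := edgeSet_ncard_le_choose_two_support G
  rcases G.support.eq_empty_or_nonempty with hempty | hne
  · have : G.edgeSet.ncard = 0 := by simpa [hempty] using hchoose
    omega
  obtain ⟨H, hGH, hH, rfl⟩ :=
    hG.exists_le_support_ncard_eq (by simpa using hn) hne ht (by simpa using htn)
  exact (Set.ncard_le_ncard (edgeSet_mono hGH)).trans (le_maxJErasableEdges hH)

theorem maxJErasableEdges_le_choose_two : maxJErasableEdges j n k ≤ k.choose 2 :=
  maxJErasableEdges_le fun G _ hk => hk ▸ edgeSet_ncard_le_choose_two_support G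

theorem choose_two_le_maxJErasableEdges (hk : 2 ≤ k) (hkj : k ≤ j + 2) (hkn : k ≤ n)
    (hn : j + 1 ≤ n) : k.choose 2 ≤ maxJErasableEdges j n k := by
  obtain ⟨S, -, hS⟩ :=
    Set.exists_subset_card_eq (s := (Set.univ : Set (Fin n))) (n := k) (by simpa)
  have hsupp :=
    support_fromEdgeSet_sym2 ((Set.one_lt_ncard_iff_nontrivial (s := S)).mp (by omega))
  have := le_maxJErasableEdges (jErasable_of_support_ncard_le (by simpa using hn)
    (G := fromEdgeSet S.sym2) (by rw [hsupp, hS]; omega))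
  rwa [edgeSet_ncard_fromEdgeSet_sym2, hsupp, hS] at this

theorem JErasable.exists_edgeSet_ncard_le {G : SimpleGraph (Fin n)} (hG : JErasable j G)
    (hk : j + 3 ≤ G.support.ncard) :
    ∃ k₁, j + 1 ≤ k₁ ∧ k₁ ≤ G.support.ncard - 1 ∧ G.edgeSet.ncard ≤
      1 + (maxJErasableEdges j n k₁ + maxJErasableEdges j n (G.support.ncard + j - k₁)) := by
  have hn : G.support.ncard ≤ n := by simpa using Set.ncard_le_card G.support
  have hbot : G ≠ ⊥ := by rintro rfl; simp at hk
  obtain ⟨G', hstep, -⟩ :=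
    ((jErasable_iff_reflTransGen.mp hG).cases_head).resolve_left hbot
  obtain ⟨G₁, h₁, G₂, h₂, hE, hs₁, hs₂, hs⟩ := hstep.exists_split (by simp; omega)
  set k₁ := max (j + 1) G₁.support.ncard
  have e₁ := (hG.mono h₁).edgeSet_ncard_le_maxJErasableEdges (t := k₁) (by omega)
    (le_max_right _ _) (by omega)
  have e₂ := (hG.mono h₂).edgeSet_ncard_le_maxJErasableEdges
    (t := G.support.ncard + j - k₁) (by omega) (by omega) (by omega)
  exact ⟨k₁, le_max_left _ _, by omega, by omega⟩

end

theorem maxJErasableEdges_bounds_general (j n : ℕ) (hj : 2 ≤ j) :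
    (∀ k, j + 1 ≤ k → k ≤ j + 2 → k ≤ n → maxJErasableEdges j n k = k.choose 2) ∧
    (∀ k, j + 3 ≤ k → k ≤ n →
      ∃ k₁ k₂, j + 1 ≤ k₁ ∧ j + 1 ≤ k₂ ∧ k₁ ≤ k - 1 ∧ k₂ ≤ k - 1 ∧
        k₁ + k₂ = k + j ∧
        maxJErasableEdges j n k ≤
          1 + (maxJErasableEdges j n k₁ + maxJErasableEdges j n k₂)) := by
  refine ⟨fun k hk hkj hkn => le_antisymm maxJErasableEdges_le_choose_two
    (choose_two_le_maxJErasableEdges (by omega) hkj hkn (by omega)), fun k hk hkn => ?_⟩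
  -- `k₁` maximises the bound over all admissible splittings, so it serves every graph at once.
  obtain ⟨k₁, hk₁, hmax⟩ := (Finset.Icc (j + 1) (k - 1)).exists_max_image
    (fun t => maxJErasableEdges j n t + maxJErasableEdges j n (k + j - t))
    ⟨j + 1, Finset.mem_Icc.mpr ⟨le_rfl, by omega⟩⟩
  rw [Finset.mem_Icc] at hk₁
  refine ⟨k₁, k + j - k₁, by omega, by omega, by omega, by omega, by omega,
    maxJErasableEdges_le fun G hG hs => ?_⟩
  subst hs
  obtain ⟨t, ht, htk, hle⟩ := hG.exists_edgeSet_ncard_le hk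
  have := hmax t (Finset.mem_Icc.mpr ⟨ht, htk⟩)
  omega

/-- (1) `f_j(k) = C(k,2)` for `j+1 ≤ k ≤ j+2`; (2) for `k ≥ j+3`,
`f_j(k) ≤ 1 + max (f_j(k₁) + f_j(k₂))` over `j+1 ≤ k₁, k₂ ≤ k−1` with
`k₁ + k₂ = k + j`. -/
theorem maxJErasableEdges_bounds (j n : ℕ) (hj : 2 ≤ j) (hn : j + 1 ≤ n) :
    (∀ k, j + 1 ≤ k → k ≤ j + 2 → k ≤ n → maxJErasableEdges j n k = k.choose 2) ∧
    (∀ k, j + 3 ≤ k → k ≤ n →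
      ∃ k₁ k₂, j + 1 ≤ k₁ ∧ j + 1 ≤ k₂ ∧ k₁ ≤ k - 1 ∧ k₂ ≤ k - 1 ∧
        k₁ + k₂ = k + j ∧
        maxJErasableEdges j n k ≤
          1 + (maxJErasableEdges j n k₁ + maxJErasableEdges j n k₂)) :=
  maxJErasableEdges_bounds_general j n hj
end

section
/- Fix j ≥ 2 and n ≥ j+1, and let α = C(j+1,2) + 1 and β = αj + 1. For every k with j+1 ≤ k ≤ n, every j-erasable graph on n vertices with exactly k non-isolated vertices (that is, exactly k vertices that are endpoints of edges, and n−k isolated vertices) has at most αk − β edges. -/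
open SimpleGraph
namespace JEraseAux

/-- The bound function: `C(t,2)` for `t ≤ j+1`, `α (t-j) - 1` for larger `t`,
where `α = C(j+1,2)+1`. -/
def Phi (j t : ℕ) : ℕ :=
  if t ≤ j + 1 then t.choose 2 else ((j + 1).choose 2 + 1) * (t - j) - 1

lemma phi_mono {j : ℕ} : Monotone (Phi j) := by
  intro s t hst
  unfold Phi
  split_ifs with h1 h2 h3
  · exact Nat.choose_le_choose 2 hst
  · -- s ≤ j+1 < t
    have h2' : 2 ≤ t - j := by omega
    have hmul : ((j + 1).choose 2 + 1) * 2 ≤ ((j + 1).choose 2 + 1) * (t - j) :=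
      Nat.mul_le_mul_left _ h2'
    have hcs : s.choose 2 ≤ (j + 1).choose 2 := Nat.choose_le_choose 2 h1
    omega
  · omega
  · have : s - j ≤ t - j := by omega
    have := Nat.mul_le_mul_left ((j + 1).choose 2 + 1) this
    omega

lemma phi_le {j t : ℕ} (h : j + 1 ≤ t) :
    Phi j t ≤ ((j + 1).choose 2 + 1) * (t - j) - 1 := by
  unfold Phi
  split_ifs with h1
  · have ht : t - j = 1 := by omega
    have ht' : t = j + 1 := by omega
    rw [ht, ht', mul_one]
    omega
  · exact le_rfl

lemma key_aux {j a b k : ℕ} (hA : a ≤ j + 1) (hb : b + 1 ≤ k) (hk : j + 2 ≤ k) :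
    1 + Phi j a + Phi j b ≤ Phi j k := by
  have hPa : Phi j a ≤ (j + 1).choose 2 := by
    rw [Phi, if_pos hA]; exact Nat.choose_le_choose 2 hA
  have hPb : Phi j b ≤ ((j + 1).choose 2 + 1) * (k - 1 - j) - 1 :=
    (phi_mono (show b ≤ k - 1 by omega)).trans (phi_le (by omega))
  have hPk : Phi j k = ((j + 1).choose 2 + 1) * (k - j) - 1 := by
    rw [Phi, if_neg (by omega)]
  have hsplit : ((j + 1).choose 2 + 1) * (k - j)
      = ((j + 1).choose 2 + 1) * (k - 1 - j) + ((j + 1).choose 2 + 1) := by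
    have h2 : k - j = (k - 1 - j) + 1 := by omega
    rw [h2, mul_add, mul_one]
  have hX1 : 1 ≤ ((j + 1).choose 2 + 1) * (k - 1 - j) :=
    Nat.mul_pos (by positivity) (by omega)
  generalize hX : ((j + 1).choose 2 + 1) * (k - 1 - j) = X at hPb hsplit hX1
  generalize hY : ((j + 1).choose 2 + 1) * (k - j) = Y at hPk hsplit
  clear hX hY
  omega

lemma key {j a b k : ℕ} (hk : j + 2 ≤ k) (ha : a + 1 ≤ k) (hb : b + 1 ≤ k)
    (hab : a + b ≤ k + j) : 1 + Phi j a + Phi j b ≤ Phi j k := by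
  by_cases hA : a ≤ j + 1
  · exact key_aux hA hb hk
  by_cases hB : b ≤ j + 1
  · have := key_aux hB ha hk
    omega
  -- both ≥ j + 2
  have hPa : Phi j a = ((j + 1).choose 2 + 1) * (a - j) - 1 := by
    rw [Phi, if_neg hA]
  have hPb : Phi j b = ((j + 1).choose 2 + 1) * (b - j) - 1 := by
    rw [Phi, if_neg hB]
  have hPk : Phi j k = ((j + 1).choose 2 + 1) * (k - j) - 1 := by
    rw [Phi, if_neg (by omega)]
  have hsum : ((j + 1).choose 2 + 1) * (a - j) + ((j + 1).choose 2 + 1) * (b - j)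
      ≤ ((j + 1).choose 2 + 1) * (k - j) := by
    rw [← mul_add]
    exact Nat.mul_le_mul_left _ (by omega)
  have h2a : 2 ≤ ((j + 1).choose 2 + 1) * (a - j) :=
    le_trans (by omega) (Nat.le_mul_of_pos_left _ (by positivity))
  have h2b : 2 ≤ ((j + 1).choose 2 + 1) * (b - j) :=
    le_trans (by omega) (Nat.le_mul_of_pos_left _ (by positivity))
  generalize hPA : ((j + 1).choose 2 + 1) * (a - j) = Pa at hPa hsum h2a
  generalize hPB : ((j + 1).choose 2 + 1) * (b - j) = Pb at hPb hsum h2b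
  generalize hPK : ((j + 1).choose 2 + 1) * (k - j) = Pk at hPk hsum
  clear hPA hPB hPK
  omega

end JEraseAux

namespace JEraseAux

open SimpleGraph Set

/-- Trivial bound: a graph has at most `C(k,2)` edges where `k` is the number of
non-isolated vertices. -/
lemma trivial_bound_aux {n : ℕ} : ∀ (N : ℕ) (G : SimpleGraph (Fin n)),
    G.edgeSet.ncard ≤ N → G.edgeSet.ncard ≤ (G.support.ncard).choose 2 := by
  intro N
  induction N with
  | zero => intro G h; exact h.trans (Nat.zero_le _)
  | succ N ih =>
    intro G hle
    rcases Set.eq_empty_or_nonempty G.edgeSet with h0 | ⟨e, he⟩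
    · simp [h0]
    revert he
    induction e using Sym2.ind with | _ u v => ?_
    intro he
    have huv : G.Adj u v := G.mem_edgeSet.1 he
    set G' := G.deleteEdges (G.incidenceSet u) with hG'def
    have hE' : G'.edgeSet = G.edgeSet \ G.incidenceSet u := G.edgeSet_deleteEdges _
    have hIncSub : G.incidenceSet u ⊆ G.edgeSet := G.incidenceSet_subset u
    have hIncCard : (G.incidenceSet u).ncard = (G.neighborSet u).ncard := by
      rw [← Nat.card_coe_set_eq, ← Nat.card_coe_set_eq]
      exact Nat.card_congr (G.incidenceSetEquivNeighborSet u)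
    have husup : u ∈ G.support := ⟨v, huv⟩
    have hNbSub : G.neighborSet u ⊆ G.support \ {u} := by
      intro w hw
      have hw' : G.Adj u w := hw
      exact ⟨⟨u, hw'.symm⟩, by simp [hw'.ne']⟩
    have hSupSub : G'.support ⊆ G.support \ {u} := by
      rintro w ⟨z, hz⟩
      change (G.deleteEdges (G.incidenceSet u)).Adj w z at hz
      rw [SimpleGraph.deleteEdges_adj] at hz
      refine ⟨⟨z, hz.1⟩, ?_⟩
      simp only [Set.mem_singleton_iff]
      rintro rfl
      exact hz.2 ⟨(SimpleGraph.mem_edgeSet _).2 hz.1, Sym2.mem_mk_left _ _⟩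
    have hecard : G.edgeSet.ncard = G'.edgeSet.ncard + (G.incidenceSet u).ncard := by
      rw [hE', Set.ncard_diff hIncSub]
      have := Set.ncard_le_ncard hIncSub
      omega
    have hinc1 : 1 ≤ (G.incidenceSet u).ncard :=
      (Set.ncard_pos (Set.toFinite _)).2 ⟨s(u, v), he, Sym2.mem_mk_left _ _⟩
    have hk1 : 1 ≤ G.support.ncard :=
      (Set.ncard_pos (Set.toFinite _)).2 ⟨u, husup⟩
    have hihyp := ih G' (by omega)
    have hsup' : G'.support.ncard ≤ G.support.ncard - 1 :=
      (Set.ncard_le_ncard hSupSub).trans_eq (Set.ncard_diff_singleton_of_mem husup)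
    have hnb : (G.neighborSet u).ncard ≤ G.support.ncard - 1 :=
      (Set.ncard_le_ncard hNbSub).trans_eq (Set.ncard_diff_singleton_of_mem husup)
    have hch : (G.support.ncard).choose 2
        = (G.support.ncard - 1).choose 1 + (G.support.ncard - 1).choose 2 := by
      have h1 : G.support.ncard = (G.support.ncard - 1) + 1 := by omega
      rw [h1]
      exact Nat.choose_succ_succ _ 1
    have hmono := Nat.choose_le_choose 2 hsup'
    rw [Nat.choose_one_right] at hch
    omega

end JEraseAux

namespace JEraseAux

open SimpleGraph Set

/-- Erasability is inherited by subgraphs (on the same vertex set). -/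
lemma closure_aux {j n : ℕ} : ∀ (m : ℕ) (G H : SimpleGraph (Fin n)), H ≤ G →
    (c : ℕ → SimpleGraph (Fin n)) → c 0 = G → c m = ⊥ →
    (∀ i < m, JEraseStep j (c i) (c (i + 1))) → JErasable j H := by
  intro m
  induction m with
  | zero =>
    intro G H hle c h0 hm _
    have hGbot : G = ⊥ := h0 ▸ hm
    have : H = ⊥ := le_bot_iff.1 (hGbot ▸ hle)
    exact ⟨0, fun _ => ⊥, this ▸ rfl, rfl, by omega⟩
  | succ m ih =>
    intro G H hle c h0 hm hstep
    obtain ⟨e, he, hE1, hcond⟩ := hstep 0 (Nat.succ_pos m)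
    rw [h0] at he hE1 hcond
    by_cases heH : e ∈ H.edgeSet
    · set H' := H.deleteEdges {e} with hH'def
      have hEH' : H'.edgeSet = H.edgeSet \ {e} := H.edgeSet_deleteEdges {e}
      have hle' : H' ≤ c 1 := by
        rw [← SimpleGraph.edgeSet_subset_edgeSet, hEH', hE1]
        exact Set.diff_subset_diff_left (SimpleGraph.edgeSet_subset_edgeSet.2 hle)
      obtain ⟨m', c', h0', hm', hstep'⟩ :=
        ih (c 1) H' hle' (fun i => c (i + 1)) rfl hm (fun i hi => hstep (i + 1) (by omega))
      refine ⟨m' + 1, fun i => if i = 0 then H else c' (i - 1), by simp, by simp [hm'], ?_⟩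
      intro i hi
      obtain rfl | ⟨i', rfl⟩ : i = 0 ∨ ∃ i', i = i' + 1 :=
        (by rcases i with _ | i' <;> simp : i = 0 ∨ ∃ i', i = i' + 1)
      · -- i = 0
        simp only [if_pos rfl, Nat.one_ne_zero, if_neg, Nat.sub_self]
        show JEraseStep j H (c' (1 - 1))
        rw [show (1:ℕ) - 1 = 0 from rfl, h0']
        refine ⟨e, heH, hEH', ?_⟩
        rcases hcond with hl | ⟨V1, V2, hd, hc, hex, huniq⟩
        · exact Or.inl hl
        · exact Or.inr ⟨V1, V2, hd, hc, hex,
            fun a ha b hb hadj => huniq a ha b hb (hle hadj)⟩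
      · -- i = i' + 1
        show JEraseStep j (c' (i' + 1 - 1)) (c' (i' + 1 + 1 - 1))
        rw [Nat.add_sub_cancel, Nat.add_sub_cancel]
        exact hstep' i' (by omega)
    · have hle'' : H ≤ c 1 := by
        rw [← SimpleGraph.edgeSet_subset_edgeSet, hE1]
        intro f hf
        exact ⟨SimpleGraph.edgeSet_subset_edgeSet.2 hle hf,
          fun hfe => heH (Set.mem_singleton_iff.1 hfe ▸ hf)⟩
      exact ih (c 1) H hle'' (fun i => c (i + 1)) rfl hm (fun i hi => hstep (i + 1) (by omega))

end JEraseAux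

namespace JEraseAux

open SimpleGraph Set

/-- Restriction of a graph to edges avoiding a set `S`. -/
def restrict {n : ℕ} (G : SimpleGraph (Fin n)) (S : Set (Fin n)) : SimpleGraph (Fin n) where
  Adj a b := G.Adj a b ∧ a ∉ S ∧ b ∉ S
  symm := ⟨fun a b h => ⟨h.1.symm, h.2.2, h.2.1⟩⟩
  loopless := ⟨fun a h => G.loopless.irrefl a h.1⟩

lemma restrict_le {n : ℕ} (G : SimpleGraph (Fin n)) (S : Set (Fin n)) :
    restrict G S ≤ G := fun _ _ h => h.1

lemma main_bound {j n : ℕ} (hn : j + 2 ≤ n) : ∀ (N : ℕ) (G : SimpleGraph (Fin n)),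
    G.edgeSet.ncard ≤ N → JErasable j G → G.edgeSet.ncard ≤ Phi j (G.support.ncard) := by
  intro N
  induction N with
  | zero => intro G h _; exact h.trans (Nat.zero_le _)
  | succ N ih =>
    intro G hle hG
    by_cases hksmall : G.support.ncard ≤ j + 1
    · rw [Phi, if_pos hksmall]
      exact trivial_bound_aux G.edgeSet.ncard G le_rfl
    push_neg at hksmall
    obtain ⟨m, c, h0, hm, hstep⟩ := hG
    have hm0 : m ≠ 0 := by
      rintro rfl
      have hGbot : G = ⊥ := h0 ▸ hm
      have : G.support = ∅ := by
        ext v; simp [hGbot, SimpleGraph.mem_support]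
      rw [this] at hksmall
      simp at hksmall
    obtain ⟨e, he, hE1, hcond⟩ := hstep 0 (by omega)
    rw [h0] at he hcond
    have hnFin : Nat.card (Fin n) = n := by simp
    rcases hcond with hl | ⟨V1, V2, hdisj, hcardV, ⟨x, hx, y, hy, hexy⟩, huniq⟩
    · omega
    subst hexy
    have hxy : G.Adj x y := G.mem_edgeSet.1 he
    have hxn2 : x ∉ V2 := fun h => Set.disjoint_left.1 hdisj hx h
    have hyn1 : y ∉ V1 := fun h => Set.disjoint_left.1 hdisj h hy
    set G1 := restrict G V2 with hG1def
    set G2 := restrict G V1 with hG2def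
    have hG1le : G1 ≤ G := restrict_le G V2
    have hG2le : G2 ≤ G := restrict_le G V1
    -- edge classification
    have hclass : G.edgeSet ⊆ G1.edgeSet ∪ G2.edgeSet ∪ {s(x, y)} := by
      intro f
      induction f using Sym2.ind with | _ a b => ?_
      intro hf
      have hab : G.Adj a b := G.mem_edgeSet.1 hf
      by_cases ha2 : a ∈ V2
      · by_cases hb1 : b ∈ V1
        · have := huniq b hb1 a ha2 hab.symm
          refine Or.inr ?_
          rw [Set.mem_singleton_iff, ← this, Sym2.eq_swap]
        · have ha1 : a ∉ V1 := fun h => Set.disjoint_left.1 hdisj h ha2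
          exact Or.inl (Or.inr ((SimpleGraph.mem_edgeSet _).2 ⟨hab, ha1, hb1⟩))
      · by_cases hb2 : b ∈ V2
        · by_cases ha1 : a ∈ V1
          · exact Or.inr (huniq a ha1 b hb2 hab)
          · have hb1 : b ∉ V1 := fun h => Set.disjoint_left.1 hdisj h hb2
            exact Or.inl (Or.inr ((SimpleGraph.mem_edgeSet _).2 ⟨hab, ha1, hb1⟩))
        · exact Or.inl (Or.inl ((SimpleGraph.mem_edgeSet _).2 ⟨hab, ha2, hb2⟩))
    -- edge counts
    have hE1card : 1 ≤ G.edgeSet.ncard :=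
      (Set.ncard_pos (Set.toFinite _)).2 ⟨s(x, y), he⟩
    have hG1sub : G1.edgeSet ⊆ G.edgeSet \ {s(x, y)} := by
      intro f hf
      refine ⟨SimpleGraph.edgeSet_subset_edgeSet.2 hG1le hf, ?_⟩
      rw [Set.mem_singleton_iff]
      rintro rfl
      exact ((SimpleGraph.mem_edgeSet _).1 hf).2.2 hy
    have hG2sub : G2.edgeSet ⊆ G.edgeSet \ {s(x, y)} := by
      intro f hf
      refine ⟨SimpleGraph.edgeSet_subset_edgeSet.2 hG2le hf, ?_⟩
      rw [Set.mem_singleton_iff]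
      rintro rfl
      exact ((SimpleGraph.mem_edgeSet _).1 hf).2.1 hx
    have hdiffcard : (G.edgeSet \ {s(x, y)}).ncard = G.edgeSet.ncard - 1 :=
      Set.ncard_diff_singleton_of_mem he
    have hm1 : G1.edgeSet.ncard ≤ N := by
      have := (Set.ncard_le_ncard hG1sub).trans_eq hdiffcard
      omega
    have hm2 : G2.edgeSet.ncard ≤ N := by
      have := (Set.ncard_le_ncard hG2sub).trans_eq hdiffcard
      omega
    have hcount : G.edgeSet.ncard ≤ G1.edgeSet.ncard + G2.edgeSet.ncard + 1 := by
      have h1 := Set.ncard_le_ncard hclass (Set.toFinite _)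
      have h2 := Set.ncard_union_le (G1.edgeSet ∪ G2.edgeSet) ({s(x, y)} : Set (Sym2 (Fin n)))
      have h3 := Set.ncard_union_le G1.edgeSet G2.edgeSet
      have h4 : ({s(x, y)} : Set (Sym2 (Fin n))).ncard = 1 := Set.ncard_singleton _
      omega
    -- erasability of the parts
    have hG1er : JErasable j G1 := closure_aux m G G1 hG1le c h0 hm hstep
    have hG2er : JErasable j G2 := closure_aux m G G2 hG2le c h0 hm hstep
    have hb1 := ih G1 hm1 hG1er
    have hb2 := ih G2 hm2 hG2er
    -- support counts
    have hys : y ∈ G.support := ⟨x, hxy.symm⟩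
    have hxs : x ∈ G.support := ⟨y, hxy⟩
    have hs1 : G1.support ⊆ G.support \ {y} := by
      rintro w ⟨z, hz⟩
      refine ⟨SimpleGraph.support_mono hG1le ⟨z, hz⟩, ?_⟩
      rw [Set.mem_singleton_iff]
      rintro rfl
      exact hz.2.1 hy
    have hs2 : G2.support ⊆ G.support \ {x} := by
      rintro w ⟨z, hz⟩
      refine ⟨SimpleGraph.support_mono hG2le ⟨z, hz⟩, ?_⟩
      rw [Set.mem_singleton_iff]
      rintro rfl
      exact hz.2.1 hx
    have hacard : G1.support.ncard ≤ G.support.ncard - 1 :=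
      (Set.ncard_le_ncard hs1).trans_eq (Set.ncard_diff_singleton_of_mem hys)
    have hbcard : G2.support.ncard ≤ G.support.ncard - 1 :=
      (Set.ncard_le_ncard hs2).trans_eq (Set.ncard_diff_singleton_of_mem hxs)
    have hk1 : 1 ≤ G.support.ncard := by omega
    have hinter : G1.support ∩ G2.support ⊆ (V1 ∪ V2)ᶜ := by
      rintro w ⟨⟨z1, hz1⟩, ⟨z2, hz2⟩⟩
      rw [Set.mem_compl_iff, Set.mem_union]
      push_neg
      exact ⟨hz2.2.1, hz1.2.1⟩
    have hcompl : ((V1 ∪ V2)ᶜ).ncard = j := by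
      have h1 := Set.ncard_add_ncard_compl (V1 ∪ V2)
      have h2 : (V1 ∪ V2).ncard = V1.ncard + V2.ncard := Set.ncard_union_eq hdisj
      omega
    have hunion : (G1.support ∪ G2.support).ncard ≤ G.support.ncard :=
      Set.ncard_le_ncard (Set.union_subset (SimpleGraph.support_mono hG1le)
        (SimpleGraph.support_mono hG2le))
    have hib : (G1.support ∩ G2.support).ncard ≤ j :=
      (Set.ncard_le_ncard hinter).trans_eq hcompl
    have hsum := Set.ncard_union_add_ncard_inter G1.support G2.support
    have hkey := key (j := j) (a := G1.support.ncard) (b := G2.support.ncard)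
      (k := G.support.ncard) (by omega) (by omega) (by omega) (by omega)
    omega

end JEraseAux

/-- With `α = C(j+1,2) + 1` and `β = αj + 1`, every `j`-erasable graph on `n`
vertices with exactly `k` vertices incident to an edge (`j+1 ≤ k ≤ n`) has at most
`αk − β` edges. -/
theorem jErasable_linear_bound (j n k : ℕ) (hj : 2 ≤ j) (hn : j + 1 ≤ n)
    (hk₁ : j + 1 ≤ k) (hk₂ : k ≤ n)
    (G : SimpleGraph (Fin n)) (hG : JErasable j G)
    (hnoniso : {v : Fin n | ∃ w, G.Adj v w}.ncard = k) :
    (G.edgeSet.ncard : ℤ) ≤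
      ((j + 1).choose 2 + 1 : ℤ) * k - ((((j + 1).choose 2 + 1 : ℤ)) * j + 1) := by
  have hsupp : G.support.ncard = k := hnoniso
  by_cases hcase : n = j + 1
  · have hkval : k = j + 1 := by omega
    have h1 : G.edgeSet.ncard ≤ (j + 1).choose 2 := by
      have := JEraseAux.trivial_bound_aux (n := n) G.edgeSet.ncard G le_rfl
      rw [hsupp, hkval] at this
      exact this
    subst hkval
    have h2 : (G.edgeSet.ncard : ℤ) ≤ ((j + 1).choose 2 : ℤ) := Nat.cast_le.2 h1
    push_cast at h2 ⊢
    nlinarith [h2]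
  · have hn2 : j + 2 ≤ n := by omega
    have hmain := JEraseAux.main_bound hn2 G.edgeSet.ncard G le_rfl hG
    rw [hsupp] at hmain
    have hphile : JEraseAux.Phi j k ≤ ((j + 1).choose 2 + 1) * (k - j) - 1 :=
      JEraseAux.phi_le hk₁
    have hfin : G.edgeSet.ncard ≤ ((j + 1).choose 2 + 1) * (k - j) - 1 :=
      hmain.trans hphile
    have hpos : 1 ≤ ((j + 1).choose 2 + 1) * (k - j) :=
      Nat.mul_pos (by positivity) (by omega)
    have hjk : j ≤ k := by omega
    zify [hpos, hjk] at hfin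
    nlinarith [hfin]
end
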